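/- arXiv:1203.3857 — 4 statements merged into one kernel-verified Lean document; each statement's English description precedes it below -/
import Mathlib

section
/- Deterministic specialization of Lemma 4.4: passing from the inverse equation to the Riccati equation. Let T > 0, let A, B, C, Q : [0,T] → M_n(ℝ) be continuous with Q(t) symmetric, let R : [0,T] → M_n(ℝ) be continuously differentiable with R(t) symmetric, and let H be symmetric with R(T) + H positive definite. Assume R(t)B(t) + C(t)'R(t) = 0 for all t. Set Ã := A − BC and Q̃ := Q + C'RC + R(BC − A) + (C'B' − A')R − R'. Suppose X : [0,T] → M_n(ℝ) is continuously differentiable, X(t) is positive definite for every t, X(T) = (R(T)+H)⁻¹, and X'(t) = Ã(t)X(t) + X(t)Ã(t)' − B(t)X(t)B(t)' + X(t)Q̃(t)X(t) for all t ∈ [0,T]. Then P := X⁻¹ − R satisfies P(T) = H, R(t) + P(t) is positive definite for all t, and P'(t) = −[PA + A'P + C'PC + Q](t) + [PB + C'P](t)(R(t)+P(t))⁻¹[B'P + PC](t) for all t ∈ [0,T]. -/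
/-!
With `P = X⁻¹ - R` we have `R + P = X⁻¹`, so positivity and the terminal value are immediate,
and `P' = -X⁻¹ X' X⁻¹ - R'`. Substituting the inverse equation for `X'` turns this into the
Riccati right-hand side; the only terms that do not cancel outright are
`-(R B + C'R) C - C'(B'R + R C)`, which vanish by the constraint `R B + C'R = 0` and its transpose.
-/

open Matrix Set

attribute [local instance] Matrix.normedAddCommGroup Matrix.normedSpace

theorem HasDerivWithinAt.ringInverse {𝕜 R : Type*} [NontriviallyNormedField 𝕜] [NormedRing R]
    [NormedAlgebra 𝕜 R] [HasSummableGeomSeries R] {f : 𝕜 → R} {f' : R} {s : Set 𝕜} {x : 𝕜}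
    (hf : HasDerivWithinAt f f' s x) (hx : IsUnit (f x)) :
    HasDerivWithinAt (fun t => Ring.inverse (f t))
      (-(Ring.inverse (f x) * f' * Ring.inverse (f x))) s x := by
  obtain ⟨u, hu⟩ := hx
  have hinv := hasFDerivAt_ringInverse (𝕜 := 𝕜) u
  rw [← Ring.inverse_unit, hu] at hinv
  simpa [Function.comp_def, mul_assoc] using hinv.comp_hasDerivWithinAt x hf

theorem HasDerivWithinAt.matrix_inv {𝕜 m : Type*} [NontriviallyNormedField 𝕜] [CompleteSpace 𝕜]
    [Fintype m] [DecidableEq m] {f : 𝕜 → Matrix m m 𝕜} {f' : Matrix m m 𝕜} {s : Set 𝕜} {x : 𝕜}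
    (hf : HasDerivWithinAt f f' s x) (hx : IsUnit (f x)) :
    HasDerivWithinAt (fun t => (f t)⁻¹) (-((f x)⁻¹ * f' * (f x)⁻¹)) s x := by
  -- Derivatives only see the topology, so we may switch to the `L∞`-operator norm, for which
  -- matrices form a complete normed algebra.
  let _ := Matrix.linftyOpNormedRing (n := m) (α := 𝕜)
  let _ := Matrix.linftyOpNormedAlgebra (n := m) (R := 𝕜) (α := 𝕜)
  have : HasSummableGeomSeries (Matrix m m 𝕜) :=
    @instHasSummableGeomSeriesOfCompleteSpace _ _ (instCompleteSpace m m 𝕜)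
  simp only [nonsing_inv_eq_ringInverse]
  exact hf.ringInverse hx

theorem riccati_identity_of_inverse_equation {α : Type*} [Ring α]
    (a a' b b' c c' q r r' x y : α) (hxy : x * y = 1) (hyx : y * x = 1)
    (hrb : r * b + c' * r = 0) (hbr : b' * r + r * c = 0) :
    -(y * ((a - b * c) * x + x * (a' - c' * b') - b * x * b'
        + x * (q + c' * r * c + r * (b * c - a) + (c' * b' - a') * r - r') * x) * y) - r'
      = -((y - r) * a + a' * (y - r) + c' * (y - r) * c + q)
        + ((y - r) * b + c' * (y - r)) * x * (b' * (y - r) + (y - r) * c) := by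
  have hx : ∀ z : α, x * (y * z) = z := fun z => by rw [← mul_assoc, hxy, one_mul]
  have hy : ∀ z : α, y * (x * z) = z := fun z => by rw [← mul_assoc, hyx, one_mul]
  have hleft : (y - r) * b + c' * (y - r) = y * b + c' * y := by
    rw [← sub_zero (y * b + c' * y), ← hrb]; noncomm_ring
  have hright : b' * (y - r) + (y - r) * c = b' * y + y * c := by
    rw [← sub_zero (b' * y + y * c), ← hbr]; noncomm_ring
  rw [hleft, hright, ← sub_eq_zero]
  calc _ = -((r * b + c' * r) * c) - c' * (b' * r + r * c) := by
        simp only [mul_add, add_mul, mul_sub, sub_mul, mul_assoc, hxy, mul_one, hx, hy]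
        abel
    _ = 0 := by rw [hrb, hbr]; simp

theorem inverse_equation_yields_riccati_solution_general
    (T : ℝ) (n : ℕ)
    (A B C Q R R' X : ℝ → Matrix (Fin n) (Fin n) ℝ)
    (H : Matrix (Fin n) (Fin n) ℝ)
    (hRsymm : ∀ t ∈ Icc 0 T, (R t)ᵀ = R t)
    (hRderiv : ∀ t ∈ Icc 0 T, HasDerivWithinAt R (R' t) (Icc 0 T) t)
    (hRTH : (R T + H).PosDef)
    (hi : ∀ t ∈ Icc 0 T, R t * B t + (C t)ᵀ * R t = 0)
    (hXpos : ∀ t ∈ Icc 0 T, (X t).PosDef)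
    (hXT : X T = (R T + H)⁻¹)
    (hXderiv : ∀ t ∈ Icc 0 T,
      HasDerivWithinAt X
        ((A t - B t * C t) * X t + X t * (A t - B t * C t)ᵀ
          - B t * X t * (B t)ᵀ
          + X t * (Q t + (C t)ᵀ * R t * C t + R t * (B t * C t - A t)
              + ((C t)ᵀ * (B t)ᵀ - (A t)ᵀ) * R t - R' t) * X t)
        (Icc 0 T) t) :
    (fun t => (X t)⁻¹ - R t) T = H ∧
    (∀ t ∈ Icc 0 T, (R t + ((X t)⁻¹ - R t)).PosDef) ∧
    (∀ t ∈ Icc 0 T,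
      HasDerivWithinAt (fun t => (X t)⁻¹ - R t)
        (-(((X t)⁻¹ - R t) * A t + (A t)ᵀ * ((X t)⁻¹ - R t)
            + (C t)ᵀ * ((X t)⁻¹ - R t) * C t + Q t)
          + (((X t)⁻¹ - R t) * B t + (C t)ᵀ * ((X t)⁻¹ - R t))
            * (R t + ((X t)⁻¹ - R t))⁻¹
            * ((B t)ᵀ * ((X t)⁻¹ - R t) + ((X t)⁻¹ - R t) * C t))
        (Icc 0 T) t) := by
  refine ⟨?_, fun t ht => ?_, fun t ht => ?_⟩
  · simp only [hXT, nonsing_inv_nonsing_inv _ ((isUnit_iff_isUnit_det _).1 hRTH.isUnit),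
      add_sub_cancel_left]
  · rw [add_sub_cancel]
    exact (hXpos t ht).inv
  · have hX := (hXpos t ht).isUnit
    have hXdet := (isUnit_iff_isUnit_det _).1 hX
    have hBR : (B t)ᵀ * R t + R t * C t = 0 := by
      simpa [hRsymm t ht] using congrArg transpose (hi t ht)
    have hP := ((hXderiv t ht).matrix_inv hX).fun_sub (hRderiv t ht)
    rw [transpose_sub, transpose_mul] at hP
    rw [add_sub_cancel, nonsing_inv_nonsing_inv _ hXdet,
      ← riccati_identity_of_inverse_equation _ _ _ _ _ _ _ _ _ _ _
        (mul_nonsing_inv _ hXdet) (nonsing_inv_mul _ hXdet) (hi t ht) hBR]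
    exact hP

/-- Deterministic specialization of Lemma 4.4: passing from the inverse
equation to the Riccati equation. -/
theorem inverse_equation_yields_riccati_solution
    (T : ℝ) (hT : 0 < T) (n : ℕ)
    (A B C Q R R' X : ℝ → Matrix (Fin n) (Fin n) ℝ)
    (H : Matrix (Fin n) (Fin n) ℝ)
    (hA : ContinuousOn A (Icc 0 T)) (hB : ContinuousOn B (Icc 0 T))
    (hC : ContinuousOn C (Icc 0 T)) (hQ : ContinuousOn Q (Icc 0 T))
    (hR' : ContinuousOn R' (Icc 0 T))
    (hQsymm : ∀ t ∈ Icc 0 T, (Q t)ᵀ = Q t)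
    (hRsymm : ∀ t ∈ Icc 0 T, (R t)ᵀ = R t)
    (hRderiv : ∀ t ∈ Icc 0 T, HasDerivWithinAt R (R' t) (Icc 0 T) t)
    (hHsymm : Hᵀ = H)
    (hRTH : (R T + H).PosDef)
    (hi : ∀ t ∈ Icc 0 T, R t * B t + (C t)ᵀ * R t = 0)
    (hXpos : ∀ t ∈ Icc 0 T, (X t).PosDef)
    (hXT : X T = (R T + H)⁻¹)
    (hXderiv : ∀ t ∈ Icc 0 T,
      HasDerivWithinAt X
        ((A t - B t * C t) * X t + X t * (A t - B t * C t)ᵀ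
          - B t * X t * (B t)ᵀ
          + X t * (Q t + (C t)ᵀ * R t * C t + R t * (B t * C t - A t)
              + ((C t)ᵀ * (B t)ᵀ - (A t)ᵀ) * R t - R' t) * X t)
        (Icc 0 T) t) :
    (fun t => (X t)⁻¹ - R t) T = H ∧
    (∀ t ∈ Icc 0 T, (R t + ((X t)⁻¹ - R t)).PosDef) ∧
    (∀ t ∈ Icc 0 T,
      HasDerivWithinAt (fun t => (X t)⁻¹ - R t)
        (-(((X t)⁻¹ - R t) * A t + (A t)ᵀ * ((X t)⁻¹ - R t)
            + (C t)ᵀ * ((X t)⁻¹ - R t) * C t + Q t)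
          + (((X t)⁻¹ - R t) * B t + (C t)ᵀ * ((X t)⁻¹ - R t))
            * (R t + ((X t)⁻¹ - R t))⁻¹
            * ((B t)ᵀ * ((X t)⁻¹ - R t) + ((X t)⁻¹ - R t) * C t))
        (Icc 0 T) t) :=
  inverse_equation_yields_riccati_solution_general T n A B C Q R R' X H hRsymm hRderiv hRTH hi hXpos
    hXT hXderiv
end

section
/- Deterministic specialization of Lemma 4.2: global solvability of the definite matrix Riccati equation. Let T > 0 and let Ã, B, Q̃ : [0,T] → M_n(ℝ) be continuous with Q̃(t) symmetric positive semidefinite for all t, and let η ∈ M_n(ℝ) be symmetric positive semidefinite. Then there exists exactly one continuously differentiable X : [0,T] → M_n(ℝ) with X(T) = η and X'(t) = Ã(t)X(t) + X(t)Ã(t)' − B(t)X(t)B(t)' + X(t)Q̃(t)X(t) for all t ∈ [0,T]. Moreover X(t) is symmetric positive semidefinite for every t ∈ [0,T], and if in addition η is positive definite then X(t) is positive definite for every t ∈ [0,T]. -/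
/-!
The equation `X' = riccati (A t) (B t) (Q t) X := A X + X Aᵀ - B X Bᵀ + X Q X` is solved
backwards from `X T = η`. Its right-hand side is locally Lipschitz in `X`, so solutions are
unique and exist locally; uniqueness also makes them symmetric, `Xᵀ` being a solution too.
A solution on `[τ, T]` extends to `[0, T]` once `‖X τ‖` is bounded independently of `τ`.

The bounds come from a maximum principle for matrix-valued curves: at the last time `c` at
which `M = X - φ I` is not positive definite, some `v ≠ 0` has `M c v = 0`, hence `X c v = φ v`,
and then `vᵀ (riccati X) v = 2 φ vᵀ A v - (Bᵀ v)ᵀ X (Bᵀ v) + φ² vᵀ Q v`. If `φ` grows fast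
enough this makes `(vᵀ M v)' < 0` at `c`, although `vᵀ M v` vanishes at `c` and is positive
after it. The barriers `φ = -δ e^{κ (t - s)}` (`δ → 0`) give `X ≥ 0`, `u = U e^{κ (T - s)}` in
`u I - X > 0` gives the a priori bound, and `φ = δ e^{-κ (T - s)}` with `η > δ I` keeps `X`
positive definite.
-/

open Matrix Set Metric Filter Real
open scoped NNReal Topology

-- `‖·‖` on matrices is the entrywise sup norm, whence the factors `Fintype.card m` below.
attribute [local instance] Matrix.normedAddCommGroup Matrix.normedSpace

section ODE

variable {E : Type*} [NormedAddCommGroup E] [NormedSpace ℝ E]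

theorem HasDerivWithinAt.Icc_union {Y : ℝ → E} {Y' : ℝ → E} {a b c : ℝ}
    (hac : a ≤ c) (hcb : c ≤ b)
    (h₁ : ∀ t ∈ Icc a c, HasDerivWithinAt Y (Y' t) (Icc a c) t)
    (h₂ : ∀ t ∈ Icc c b, HasDerivWithinAt Y (Y' t) (Icc c b) t) :
    ∀ t ∈ Icc a b, HasDerivWithinAt Y (Y' t) (Icc a b) t := by
  intro t _
  have extend {s : Set ℝ} (hs : IsClosed s) (h : ∀ t ∈ s, HasDerivWithinAt Y (Y' t) s t) :
      HasDerivWithinAt Y (Y' t) s t := by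
    by_cases ht : t ∈ s
    · exact h t ht
    · exact HasFDerivWithinAt.of_notMem_closure (by rwa [hs.closure_eq])
  rw [← Icc_union_Icc_eq_Icc hac hcb]
  exact (extend isClosed_Icc h₁).union (extend isClosed_Icc h₂)

theorem eqOn_Icc_of_hasDerivWithinAt_of_lipschitzOnWith {f : ℝ → E → E} {a b : ℝ}
    {X Y : ℝ → E}
    (hlip : ∀ R, ∃ K, ∀ t ∈ Icc a b, LipschitzOnWith K (f t) (closedBall 0 R))
    (hX : ∀ t ∈ Icc a b, HasDerivWithinAt X (f t (X t)) (Icc a b) t)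
    (hY : ∀ t ∈ Icc a b, HasDerivWithinAt Y (f t (Y t)) (Icc a b) t) (hb : X b = Y b) :
    EqOn X Y (Icc a b) := by
  have hXc : ContinuousOn X (Icc a b) := fun t ht ↦ (hX t ht).continuousWithinAt
  have hYc : ContinuousOn Y (Icc a b) := fun t ht ↦ (hY t ht).continuousWithinAt
  obtain ⟨RX, hRX⟩ := isCompact_Icc.exists_bound_of_continuousOn hXc
  obtain ⟨RY, hRY⟩ := isCompact_Icc.exists_bound_of_continuousOn hYc
  obtain ⟨K, hK⟩ := hlip (max RX RY)
  have hderiv {Z : ℝ → E} (hZ : ∀ t ∈ Icc a b, HasDerivWithinAt Z (f t (Z t)) (Icc a b) t)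
      (t : ℝ) (ht : t ∈ Ioc a b) : HasDerivWithinAt Z (f t (Z t)) (Iic t) t :=
    (hZ t (Ioc_subset_Icc_self ht)).mono_of_mem_nhdsWithin (Icc_mem_nhdsLE_of_mem ht)
  refine ODE_solution_unique_of_mem_Icc_left (s := fun _ ↦ closedBall 0 (max RX RY))
    (fun t ht ↦ hK t (Ioc_subset_Icc_self ht)) hXc (hderiv hX) (fun t ht ↦ ?_) hYc (hderiv hY)
    (fun t ht ↦ ?_) hb
  · exact mem_closedBall_zero_iff.2 ((hRX t (Ioc_subset_Icc_self ht)).trans (le_max_left _ _))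
  · exact mem_closedBall_zero_iff.2 ((hRY t (Ioc_subset_Icc_self ht)).trans (le_max_right _ _))

theorem exists_hasDerivWithinAt_Icc_extend_left [CompleteSpace E] {f : ℝ → E → E}
    {τ' τ b R : ℝ} {K L : ℝ≥0} {X : ℝ → E} (hτ' : τ' ≤ τ) (hτb : τ ≤ b)
    (hstep : L * (τ - τ') ≤ 1) (hcont : ∀ x, ContinuousOn (f · x) (Icc τ' τ))
    (hlip : ∀ t ∈ Icc τ' τ, LipschitzOnWith K (f t) (closedBall 0 (R + 1)))
    (hbdd : ∀ t ∈ Icc τ' τ, ∀ x ∈ closedBall 0 (R + 1), ‖f t x‖ ≤ L)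
    (hX : ∀ t ∈ Icc τ b, HasDerivWithinAt X (f t (X t)) (Icc τ b) t) (hXτ : ‖X τ‖ ≤ R) :
    ∃ Y : ℝ → E, Y b = X b ∧ ∀ t ∈ Icc τ' b, HasDerivWithinAt Y (f t (Y t)) (Icc τ' b) t := by
  have hball : closedBall (X τ) 1 ⊆ closedBall 0 (R + 1) :=
    closedBall_subset_closedBall' (by simpa [add_comm] using hXτ)
  have hPL : IsPicardLindelof f (tmin := τ') (tmax := τ) ⟨τ, hτ', le_rfl⟩ (X τ) 1 0 L K :=
    { lipschitzOnWith := fun t ht ↦ (hlip t ht).mono hball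
      continuousOn := fun x _ ↦ hcont x
      norm_le := fun t ht x hx ↦ hbdd t ht x (hball hx)
      mul_max_le := by simpa [max_eq_right (sub_nonneg.2 hτ')] using hstep }
  obtain ⟨g, hgτ, hg⟩ := hPL.exists_eq_forall_mem_Icc_hasDerivWithinAt₀
  refine ⟨fun t ↦ if t < τ then g t else X t, by simp [hτb.not_gt], ?_⟩
  refine HasDerivWithinAt.Icc_union hτ' hτb (fun t ht ↦ ?_) (fun t ht ↦ ?_)
  · have heq : EqOn (fun t ↦ if t < τ then g t else X t) g (Icc τ' τ) := fun s hs ↦ by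
      rcases hs.2.lt_or_eq with hs | rfl
      · simp [hs]
      · simp [hgτ]
    simpa [heq ht] using (hg t ht).congr_of_mem heq ht
  · have heq : EqOn (fun t ↦ if t < τ then g t else X t) X (Icc τ b) := fun s hs ↦ by
      simp [hs.1.not_gt]
    simpa [heq ht] using (hX t ht).congr_of_mem heq ht

theorem exists_forall_mem_Icc_hasDerivWithinAt_of_norm_le [CompleteSpace E]
    {f : ℝ → E → E} {a b R : ℝ} {K L : ℝ≥0} {η : E} (hab : a ≤ b)
    (hcont : ∀ x, ContinuousOn (f · x) (Icc a b))
    (hlip : ∀ t ∈ Icc a b, LipschitzOnWith K (f t) (closedBall 0 (R + 1)))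
    (hbdd : ∀ t ∈ Icc a b, ∀ x ∈ closedBall 0 (R + 1), ‖f t x‖ ≤ L)
    (hR : ∀ τ ∈ Icc a b, ∀ X : ℝ → E, X b = η →
      (∀ t ∈ Icc τ b, HasDerivWithinAt X (f t (X t)) (Icc τ b) t) → ‖X τ‖ ≤ R) :
    ∃ X : ℝ → E, X b = η ∧ ∀ t ∈ Icc a b, HasDerivWithinAt X (f t (X t)) (Icc a b) t := by
  let P (τ : ℝ) : Prop :=
    ∃ X : ℝ → E, X b = η ∧ ∀ t ∈ Icc τ b, HasDerivWithinAt X (f t (X t)) (Icc τ b) t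
  set δ : ℝ := 1 / (L + 1)
  have hδ : 0 < δ := by positivity
  have step : ∀ τ ∈ Icc a b, P τ → P (max a (τ - δ)) := by
    rintro τ hτ ⟨X, hXb, hX⟩
    have hsub : Icc (max a (τ - δ)) τ ⊆ Icc a b := Icc_subset_Icc (le_max_left _ _) hτ.2
    have hstep : L * (τ - max a (τ - δ)) ≤ 1 := by
      calc (L : ℝ) * (τ - max a (τ - δ)) ≤ L * δ := by gcongr; linarith [le_max_right a (τ - δ)]
        _ ≤ 1 := by rw [mul_one_div, div_le_one (by positivity)]; linarith
    obtain ⟨Y, hYb, hY⟩ := exists_hasDerivWithinAt_Icc_extend_left (max_le hτ.1 (by linarith)) hτ.2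
      hstep (fun x ↦ (hcont x).mono hsub) (fun t ht ↦ hlip t (hsub ht))
      (fun t ht ↦ hbdd t (hsub ht)) hX (hR τ hτ X hXb hX)
    exact ⟨Y, hYb.trans hXb, hY⟩
  have hP : ∀ k : ℕ, P (max a (b - k * δ)) := by
    intro k
    induction k with
    | zero => exact ⟨fun _ ↦ η, rfl, fun t _ ↦
        HasFDerivWithinAt.of_subsingleton (subsingleton_Icc_of_ge (by simp [hab]))⟩
    | succ k ih =>
      have hmax : max a (max a (b - k * δ) - δ) = max a (b - (k + 1 : ℕ) * δ) := by
        rw [← max_sub_sub_right, ← max_assoc, max_eq_left (sub_le_self a hδ.le)]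
        push_cast
        ring_nf
      exact hmax ▸ step _ ⟨le_max_left _ _, max_le hab (by nlinarith)⟩ ih
  obtain ⟨k, hk⟩ := exists_nat_ge ((b - a) / δ)
  have : max a (b - k * δ) = a := max_eq_left (by rw [div_le_iff₀ hδ] at hk; linarith)
  exact this ▸ hP k

end ODE

section Matrix

variable {l m p : Type*} [Fintype l] [Fintype m] [Fintype p]

theorem norm_mul_le_card_mul {α : Type*} [NormedRing α] (M : Matrix l m α) (N : Matrix m p α) :
    ‖M * N‖ ≤ Fintype.card m * ‖M‖ * ‖N‖ := by
  refine (Matrix.norm_le_iff (by positivity)).2 fun i j ↦ ?_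
  calc ‖(M * N) i j‖ ≤ ∑ k, ‖M i k‖ * ‖N k j‖ :=
        (norm_sum_le _ _).trans (Finset.sum_le_sum fun k _ ↦ norm_mul_le _ _)
    _ ≤ ∑ _k : m, ‖M‖ * ‖N‖ := by
        gcongr <;> exact norm_entry_le_entrywise_sup_norm _
    _ = Fintype.card m * ‖M‖ * ‖N‖ := by simp [mul_assoc]

theorem dotProduct_self_pos_of_ne_zero {v : m → ℝ} (hv : v ≠ 0) : 0 < v ⬝ᵥ v := by
  simpa using dotProduct_star_self_pos_iff.2 hv

theorem abs_dotProduct_mulVec_le (M : Matrix m m ℝ) (v : m → ℝ) :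
    |v ⬝ᵥ M *ᵥ v| ≤ Fintype.card m * ‖M‖ * (v ⬝ᵥ v) := by
  calc |v ⬝ᵥ M *ᵥ v| ≤ ∑ i, ∑ j, |v i| * ‖M‖ * |v j| := by
        simp only [dotProduct, mulVec, Finset.mul_sum]
        refine (Finset.abs_sum_le_sum_abs _ _).trans (Finset.sum_le_sum fun i _ ↦ ?_)
        refine (Finset.abs_sum_le_sum_abs _ _).trans (Finset.sum_le_sum fun j _ ↦ ?_)
        rw [abs_mul, abs_mul, ← mul_assoc]
        gcongr
        exact norm_entry_le_entrywise_sup_norm M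
    _ = ‖M‖ * (∑ i, |v i|) ^ 2 := by
        rw [sq, Finset.sum_mul_sum, Finset.mul_sum]
        exact Finset.sum_congr rfl fun i _ ↦ by rw [Finset.mul_sum]; ring_nf
    _ ≤ ‖M‖ * (Fintype.card m * ∑ i, |v i| ^ 2) := by
        gcongr; exact sq_sum_le_card_mul_sum_sq
    _ = Fintype.card m * ‖M‖ * (v ⬝ᵥ v) := by
        simp only [dotProduct, sq_abs, ← sq]; ring

theorem Matrix.PosSemidef.two_mul_abs_apply_le {X : Matrix m m ℝ} (hX : X.PosSemidef) (i j : m) :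
    2 * |X i j| ≤ X i i + X j j := by
  classical
  have hsymm : X j i = X i j := by simpa using congrFun (congrFun hX.isHermitian i) j
  have quad (s : ℝ) : 0 ≤ X i i + 2 * s * X i j + s ^ 2 * X j j := by
    have := hX.dotProduct_mulVec_nonneg (Pi.single i 1 + s • Pi.single j 1)
    simp [add_dotProduct, dotProduct_add, mulVec_add, mulVec_smul, hsymm] at this
    linarith
  have h₁ := quad 1
  have h₂ := quad (-1)
  norm_num at h₁ h₂
  rcases abs_cases (X i j) with ⟨h, _⟩ | ⟨h, _⟩ <;> linarith

theorem Matrix.PosSemidef.norm_le_of_posSemidef_smul_one_sub [DecidableEq m] {X : Matrix m m ℝ}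
    (hX : X.PosSemidef) {α : ℝ} (hα : 0 ≤ α) (hαX : (α • 1 - X).PosSemidef) : ‖X‖ ≤ α := by
  refine (Matrix.norm_le_iff hα).2 fun i j ↦ ?_
  have hdiag (k : m) : X k k ≤ α := by simpa using hαX.diag_nonneg (i := k)
  rw [Real.norm_eq_abs]
  linarith [hX.two_mul_abs_apply_le i j, hdiag i, hdiag j]

theorem Matrix.posDef_iff_forall_mem_sphere {M : Matrix m m ℝ} (hM : M.IsHermitian) :
    M.PosDef ↔ ∀ v ∈ sphere (0 : m → ℝ) 1, 0 < v ⬝ᵥ M *ᵥ v := by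
  refine ⟨fun h v hv ↦ ?_, fun h ↦ .of_dotProduct_mulVec_pos hM fun x hx ↦ ?_⟩
  · simpa using h.dotProduct_mulVec_pos (ne_zero_of_mem_unit_sphere ⟨v, hv⟩)
  · have hscale : x ⬝ᵥ M *ᵥ x = ‖x‖ ^ 2 * ((‖x‖⁻¹ • x) ⬝ᵥ M *ᵥ (‖x‖⁻¹ • x)) := by
      simp only [mulVec_smul, smul_dotProduct, dotProduct_smul, smul_eq_mul]
      field_simp [norm_ne_zero_iff.2 hx]
    rw [star_trivial, hscale]
    exact mul_pos (by positivity) (h _ (by simpa using norm_smul_inv_norm (𝕜 := ℝ) hx))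

theorem Matrix.PosDef.exists_pos_posDef_sub_smul_one [DecidableEq m] {M : Matrix m m ℝ}
    (hM : M.PosDef) : ∃ δ : ℝ, 0 < δ ∧ (M - δ • 1).PosDef := by
  have hherm (δ : ℝ) : (M - δ • 1).IsHermitian :=
    hM.isHermitian.sub (isHermitian_one.smul (.all δ))
  rcases (sphere (0 : m → ℝ) 1).eq_empty_or_nonempty with hS | hS
  · exact ⟨1, one_pos, (posDef_iff_forall_mem_sphere (hherm 1)).2 (by simp [hS])⟩
  obtain ⟨v₀, hv₀, hmin⟩ := (isCompact_sphere (0 : m → ℝ) 1).exists_isMinOn hS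
    (continuous_id.dotProduct (continuous_const.matrix_mulVec continuous_id)).continuousOn
  set μ := v₀ ⬝ᵥ M *ᵥ v₀
  have hμ : 0 < μ := (posDef_iff_forall_mem_sphere hM.isHermitian).1 hM v₀ hv₀
  -- `v ⬝ᵥ v ≤ card m` on the unit sphere of the sup norm, whence this choice of `δ`
  refine ⟨μ / (Fintype.card m + 1), by positivity,
    (posDef_iff_forall_mem_sphere (hherm _)).2 fun v hv ↦ ?_⟩
  have hvv : v ⬝ᵥ v ≤ Fintype.card m := by
    calc v ⬝ᵥ v ≤ ∑ _i : m, (1 : ℝ) := Finset.sum_le_sum fun i _ ↦ by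
          have : |v i| ≤ 1 := by simpa [← mem_sphere_zero_iff_norm.1 hv] using norm_le_pi_norm v i
          nlinarith [abs_mul_abs_self (v i), abs_nonneg (v i)]
      _ = Fintype.card m := by simp
  have : μ ≤ v ⬝ᵥ M *ᵥ v := hmin hv
  rw [sub_mulVec, dotProduct_sub, smul_mulVec, one_mulVec, dotProduct_smul, smul_eq_mul, sub_pos]
  calc μ / (Fintype.card m + 1) * (v ⬝ᵥ v) ≤ μ / (Fintype.card m + 1) * Fintype.card m := by
        gcongr
    _ < μ := by rw [div_mul_eq_mul_div, div_lt_iff₀ (by positivity)]; nlinarith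
    _ ≤ _ := this

theorem HasDerivWithinAt.dotProduct_mulVec {M : ℝ → Matrix m m ℝ} {M' : Matrix m m ℝ}
    {s : Set ℝ} {t : ℝ} (h : HasDerivWithinAt M M' s t) (v w : m → ℝ) :
    HasDerivWithinAt (fun t ↦ v ⬝ᵥ M t *ᵥ w) (v ⬝ᵥ M' *ᵥ w) s t :=
  let L : Matrix m m ℝ →ₗ[ℝ] ℝ :=
    { toFun N := v ⬝ᵥ N *ᵥ w
      map_add' _ _ := by simp [add_mulVec]
      map_smul' _ _ := by simp [smul_mulVec] }
  L.toContinuousLinearMap.hasFDerivAt.comp_hasDerivWithinAt t h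

theorem IsCompact.setOf_exists_mem_sphere_dotProduct_mulVec_nonpos {s : Set ℝ} (hs : IsCompact s)
    {M : ℝ → Matrix m m ℝ} (hM : ContinuousOn M s) :
    IsCompact {t ∈ s | ∃ v ∈ sphere (0 : m → ℝ) 1, v ⬝ᵥ M t *ᵥ v ≤ 0} := by
  have hq : Continuous fun q : Matrix m m ℝ × (m → ℝ) ↦ q.2 ⬝ᵥ q.1 *ᵥ q.2 :=
    continuous_snd.dotProduct (continuous_fst.matrix_mulVec continuous_snd)
  have hK : IsCompact ((s ×ˢ sphere (0 : m → ℝ) 1) ∩ {p | p.2 ⬝ᵥ M p.1 *ᵥ p.2 ≤ 0}) :=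
    (hs.prod (isCompact_sphere 0 1)).of_isClosed_subset
      ((hq.comp_continuousOn ((hM.comp continuousOn_fst fun p hp ↦ hp.1).prodMk
        continuousOn_snd)).preimage_isClosed_of_isClosed (hs.isClosed.prod isClosed_sphere)
        isClosed_Iic) inter_subset_left
  convert hK.image continuous_fst using 1
  ext t
  simp [and_assoc]

theorem Matrix.posDef_of_hasDerivWithinAt {M M' : ℝ → Matrix m m ℝ} {τ T : ℝ}
    (hM : ∀ t ∈ Icc τ T, HasDerivWithinAt M (M' t) (Icc τ T) t)
    (hherm : ∀ t ∈ Icc τ T, (M t).IsHermitian) (hT : (M T).PosDef)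
    (hker : ∀ t ∈ Ico τ T, (M t).PosSemidef → ∀ v ≠ 0, M t *ᵥ v = 0 → v ⬝ᵥ M' t *ᵥ v < 0) :
    ∀ t ∈ Icc τ T, (M t).PosDef := by
  set bad := {t ∈ Icc τ T | ∃ v ∈ sphere (0 : m → ℝ) 1, v ⬝ᵥ M t *ᵥ v ≤ 0}
  have hbad : IsCompact bad := isCompact_Icc.setOf_exists_mem_sphere_dotProduct_mulVec_nonpos
    fun t ht ↦ (hM t ht).continuousWithinAt
  have hgood : ∀ t ∈ Icc τ T, t ∉ bad → (M t).PosDef := fun t ht hnot ↦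
    (posDef_iff_forall_mem_sphere (hherm t ht)).2 fun v hv ↦ not_le.1 fun h ↦ hnot ⟨ht, v, hv, h⟩
  by_contra! ⟨t₀, ht₀, hnot⟩
  -- `c` is the last time at which `M` is not positive definite
  set c := sSup bad
  obtain ⟨hc, v, hv, hcv⟩ : c ∈ bad := hbad.sSup_mem ⟨t₀, by_contra (hnot ∘ hgood t₀ ht₀)⟩
  have hv0 : v ≠ 0 := ne_zero_of_mem_unit_sphere ⟨v, hv⟩
  have hlater : ∀ t ∈ Ioc c T, (M t).PosDef := fun t ht ↦
    hgood t ⟨hc.1.trans ht.1.le, ht.2⟩ fun htbad ↦ ht.1.not_ge (le_csSup hbad.bddAbove htbad)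
  have hcT : c < T := hc.2.lt_of_ne fun h ↦
    hcv.not_gt (by rw [h]; simpa using hT.dotProduct_mulVec_pos hv0)
  have hquad (x : m → ℝ) := fun t ht ↦ (hM t ht).dotProduct_mulVec x x
  have hpsd : (M c).PosSemidef := .of_dotProduct_mulVec_nonneg (hherm c hc) fun x ↦ by
    rw [star_trivial]
    refine ContinuousWithinAt.closure_le (s := Ioc c T) (by simp [closure_Ioc hcT.ne, hcT.le])
      continuousWithinAt_const ((hquad x c hc).continuousWithinAt.mono ?_) fun t ht ↦ ?_
    · exact Ioc_subset_Icc_self.trans (Icc_subset_Icc_left hc.1)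
    · simpa using (hlater t ht).posSemidef.dotProduct_mulVec_nonneg x
  have hzero : v ⬝ᵥ M c *ᵥ v = 0 :=
    le_antisymm hcv (by simpa using hpsd.dotProduct_mulVec_nonneg v)
  have hneg := hker c ⟨hc.1, hcT⟩ hpsd v hv0
    ((hpsd.dotProduct_mulVec_zero_iff v).1 (by simpa using hzero))
  -- yet `t ↦ v ⬝ᵥ M t *ᵥ v` attains its minimum `0` over `[c, T]` at `c`
  have hmin : IsLocalMinOn (fun t ↦ v ⬝ᵥ M t *ᵥ v) (Icc c T) c := by
    refine IsMinOn.localize fun t ht ↦ ?_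
    change v ⬝ᵥ M c *ᵥ v ≤ v ⬝ᵥ M t *ᵥ v
    rcases ht.1.eq_or_lt with rfl | hct
    · exact le_rfl
    · simpa [hzero] using ((hlater t ⟨hct, ht.2⟩).dotProduct_mulVec_pos hv0).le
  have := hmin.hasFDerivWithinAt_nonneg ((hquad v c hc).mono (Icc_subset_Icc_left hc.1))
    (sub_mem_posTangentConeAt_of_segment_subset (by rw [segment_eq_Icc hcT.le]))
  rw [ContinuousLinearMap.toSpanSingleton_apply, smul_eq_mul] at this
  nlinarith

theorem Matrix.IsHermitian.posDef_smul_one_sub [DecidableEq m] {X : Matrix m m ℝ}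
    (hX : X.IsHermitian) {U : ℝ} (hU : Fintype.card m * ‖X‖ < U) : (U • 1 - X).PosDef :=
  .of_dotProduct_mulVec_pos ((isHermitian_one.smul (.all U)).sub hX) fun v hv ↦ by
    have hvv := dotProduct_self_pos_of_ne_zero hv
    have := le_of_abs_le (abs_dotProduct_mulVec_le X v)
    rw [star_trivial, sub_mulVec, dotProduct_sub, smul_mulVec, one_mulVec, dotProduct_smul,
      smul_eq_mul]
    nlinarith

theorem Matrix.PosSemidef.of_eventually_posDef_add_smul_one [DecidableEq m] {X : Matrix m m ℝ}
    (hX : X.IsHermitian) (h : ∀ᶠ δ in 𝓝[>] (0 : ℝ), (X + δ • 1).PosDef) : X.PosSemidef :=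
  .of_dotProduct_mulVec_nonneg hX fun v ↦ by
    rw [star_trivial]
    have hlim : Tendsto (fun δ : ℝ ↦ v ⬝ᵥ X *ᵥ v + δ * (v ⬝ᵥ v)) (𝓝[>] 0)
        (𝓝 (v ⬝ᵥ X *ᵥ v)) :=
      tendsto_nhdsWithin_of_tendsto_nhds (Continuous.tendsto' (by fun_prop) 0 _ (by simp))
    refine ge_of_tendsto hlim (h.mono fun δ hδ ↦ ?_)
    simpa [add_mulVec, smul_mulVec] using hδ.posSemidef.dotProduct_mulVec_nonneg v

theorem HasDerivWithinAt.matrix_transpose {X : ℝ → Matrix m m ℝ} {X' : Matrix m m ℝ}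
    {s : Set ℝ} {t : ℝ} (h : HasDerivWithinAt X X' s t) :
    HasDerivWithinAt (fun t ↦ (X t)ᵀ) X'ᵀ s t :=
  (transposeLinearEquiv m m ℝ ℝ).toLinearMap.toContinuousLinearMap.hasFDerivAt.comp_hasDerivWithinAt
    t h

end Matrix

section Riccati

variable {m : Type*} [Fintype m]

def riccati (A B Q X : Matrix m m ℝ) : Matrix m m ℝ :=
  A * X + X * Aᵀ - B * X * Bᵀ + X * Q * X

def SolvesRiccatiOn (A B Q X : ℝ → Matrix m m ℝ) (s : Set ℝ) : Prop :=
  ∀ t ∈ s, HasDerivWithinAt X (riccati (A t) (B t) (Q t) (X t)) s t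

variable {A B Q X Y : Matrix m m ℝ}

theorem riccati_transpose (hQ : Q.IsHermitian) (X : Matrix m m ℝ) :
    (riccati A B Q X)ᵀ = riccati A B Q Xᵀ := by
  have hQ : Qᵀ = Q := hQ
  simp only [riccati, transpose_add, transpose_sub, transpose_mul, transpose_transpose, hQ]
  noncomm_ring

theorem norm_riccati_sub_le {C R : ℝ} (hA : ‖A‖ ≤ C) (hB : ‖B‖ ≤ C) (hQ : ‖Q‖ ≤ C)
    (hX : ‖X‖ ≤ R) (hY : ‖Y‖ ≤ R) :
    ‖riccati A B Q X - riccati A B Q Y‖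
      ≤ Fintype.card m * C * (2 + Fintype.card m * C + 2 * Fintype.card m * R) * ‖X - Y‖ := by
  set d : ℝ := (Fintype.card m : ℝ)
  have hC : 0 ≤ C := (norm_nonneg _).trans hA
  have hR : 0 ≤ R := (norm_nonneg _).trans hX
  have h2 (M N : Matrix m m ℝ) : ‖M * N‖ ≤ d * ‖M‖ * ‖N‖ := norm_mul_le_card_mul M N
  have h3 (M N P : Matrix m m ℝ) : ‖M * N * P‖ ≤ d * (d * ‖M‖ * ‖N‖) * ‖P‖ :=
    (h2 _ _).trans (by gcongr; exact h2 _ _)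
  have hsub : riccati A B Q X - riccati A B Q Y = A * (X - Y) + (X - Y) * Aᵀ
      - B * (X - Y) * Bᵀ + (X * Q * (X - Y) + (X - Y) * Q * Y) := by
    simp only [riccati]; noncomm_ring
  have e₁ := h2 A (X - Y)
  have e₂ := h2 (X - Y) Aᵀ
  have e₃ := h3 B (X - Y) Bᵀ
  have e₄ := h3 X Q (X - Y)
  have e₅ := h3 (X - Y) Q Y
  rw [norm_transpose] at e₂ e₃
  rw [hsub]
  refine (norm_add_le _ _).trans ((add_le_add ((norm_sub_le _ _).trans
    (add_le_add (norm_add_le _ _) le_rfl)) (norm_add_le _ _)).trans ?_)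
  have hD := norm_nonneg (X - Y)
  have hd : 0 ≤ d := by positivity
  have : d * ‖A‖ * ‖X - Y‖ + d * ‖X - Y‖ * ‖A‖ + d * (d * ‖B‖ * ‖X - Y‖) * ‖B‖
      + (d * (d * ‖X‖ * ‖Q‖) * ‖X - Y‖ + d * (d * ‖X - Y‖ * ‖Q‖) * ‖Y‖)
      ≤ d * C * ‖X - Y‖ + d * ‖X - Y‖ * C + d * (d * C * ‖X - Y‖) * C
      + (d * (d * R * C) * ‖X - Y‖ + d * (d * ‖X - Y‖ * C) * R) := by
    gcongr
  nlinarith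

theorem lipschitzOnWith_riccati {C R : ℝ} (hA : ‖A‖ ≤ C) (hB : ‖B‖ ≤ C) (hQ : ‖Q‖ ≤ C) :
    LipschitzOnWith
      (Fintype.card m * C * (2 + Fintype.card m * C + 2 * Fintype.card m * R)).toNNReal
      (riccati A B Q) (closedBall 0 R) :=
  .of_dist_le_mul fun X hX Y hY ↦ by
    rw [dist_eq_norm, dist_eq_norm]
    exact (norm_riccati_sub_le hA hB hQ (mem_closedBall_zero_iff.1 hX)
      (mem_closedBall_zero_iff.1 hY)).trans (by gcongr; exact Real.le_coe_toNNReal _)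

theorem exists_solvesRiccatiOn {A B Q : ℝ → Matrix m m ℝ} {a b R : ℝ} (hab : a ≤ b)
    (hA : ContinuousOn A (Icc a b)) (hB : ContinuousOn B (Icc a b)) (hQ : ContinuousOn Q (Icc a b))
    (hlip : ∀ r, ∃ K, ∀ t ∈ Icc a b, LipschitzOnWith K (riccati (A t) (B t) (Q t)) (closedBall 0 r))
    (η : Matrix m m ℝ)
    (hR : ∀ τ ∈ Icc a b, ∀ X, X b = η → SolvesRiccatiOn A B Q X (Icc τ b) → ‖X τ‖ ≤ R) :
    ∃ X, X b = η ∧ SolvesRiccatiOn A B Q X (Icc a b) := by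
  obtain ⟨K, hK⟩ := hlip (R + 1)
  refine exists_forall_mem_Icc_hasDerivWithinAt_of_norm_le (L := K * (R + 1).toNNReal) hab
    (fun x ↦ by simp only [riccati]; fun_prop) hK (fun t ht x hx ↦ ?_) hR
  have hR1 : 0 ≤ R + 1 := (norm_nonneg x).trans (mem_closedBall_zero_iff.1 hx)
  have := (hK t ht).norm_sub_le hx (mem_closedBall_self hR1)
  simp only [riccati, mul_zero, zero_mul, add_zero, sub_zero, sub_self] at this
  rw [NNReal.coe_mul, Real.coe_toNNReal _ hR1]
  exact this.trans (by gcongr; exact mem_closedBall_zero_iff.1 hx)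

end Riccati

section RiccatiComparison

variable {m : Type*} [Fintype m] {A B Q X : Matrix m m ℝ} {k : ℝ}

theorem dotProduct_riccati_mulVec_of_mulVec_eq_smul (hX : X.IsHermitian) {v : m → ℝ} {γ : ℝ}
    (hv : X *ᵥ v = γ • v) :
    v ⬝ᵥ riccati A B Q X *ᵥ v
      = 2 * γ * (v ⬝ᵥ A *ᵥ v) - Bᵀ *ᵥ v ⬝ᵥ X *ᵥ (Bᵀ *ᵥ v) + γ ^ 2 * (v ⬝ᵥ Q *ᵥ v) := by
  have hXt : Xᵀ = X := hX
  have hvX : v ᵥ* X = γ • v := by rw [← mulVec_transpose, hXt, hv]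
  have hAt : v ⬝ᵥ Aᵀ *ᵥ v = v ⬝ᵥ A *ᵥ v := by
    rw [mulVec_transpose, dotProduct_comm, dotProduct_mulVec]
  simp only [riccati, add_mulVec, sub_mulVec, ← mulVec_mulVec, dotProduct_add, dotProduct_sub]
  rw [dotProduct_mulVec v B, ← mulVec_transpose]
  simp only [dotProduct_mulVec v X, hvX, hv, mulVec_smul, smul_dotProduct, dotProduct_smul,
    smul_eq_mul, hAt]
  ring

structure RiccatiCoeffBound (k : ℝ) (A B Q : Matrix m m ℝ) : Prop where
  abs_quad_le : ∀ v, |v ⬝ᵥ A *ᵥ v| ≤ k * (v ⬝ᵥ v)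
  transpose_mulVec_quad_le : ∀ v, Bᵀ *ᵥ v ⬝ᵥ Bᵀ *ᵥ v ≤ k * (v ⬝ᵥ v)
  posSemidef : Q.PosSemidef
  quad_le : ∀ v, v ⬝ᵥ Q *ᵥ v ≤ k * (v ⬝ᵥ v)

theorem RiccatiCoeffBound.of_norm_le {C : ℝ} (hQ : Q.PosSemidef) (hA : ‖A‖ ≤ C) (hB : ‖B‖ ≤ C)
    (hQC : ‖Q‖ ≤ C) :
    RiccatiCoeffBound (Fintype.card m * C * (1 + Fintype.card m * C)) A B Q := by
  set d : ℝ := (Fintype.card m : ℝ)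
  have hC : 0 ≤ C := (norm_nonneg _).trans hA
  have hquad {M : Matrix m m ℝ} {c : ℝ} (hM : ‖M‖ ≤ c) (hc : d * c ≤ d * C * (1 + d * C))
      (v : m → ℝ) : |v ⬝ᵥ M *ᵥ v| ≤ d * C * (1 + d * C) * (v ⬝ᵥ v) :=
    (abs_dotProduct_mulVec_le M v).trans (mul_le_mul_of_nonneg_right
      ((mul_le_mul_of_nonneg_left hM (by positivity)).trans hc)
      (by simpa using dotProduct_self_star_nonneg v))
  have hBB : ‖B * Bᵀ‖ ≤ d * C * C :=
    (norm_mul_le_card_mul B Bᵀ).trans (by rw [norm_transpose]; gcongr)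
  have hdC : 0 ≤ d * C := by positivity
  have hle₁ : d * C ≤ d * C * (1 + d * C) := by nlinarith
  have hle₂ : d * (d * C * C) ≤ d * C * (1 + d * C) := by nlinarith
  refine ⟨hquad hA hle₁, fun v ↦ ?_, hQ, fun v ↦ (le_abs_self _).trans (hquad hQC hle₁ v)⟩
  nth_rw 1 [mulVec_transpose]
  rw [← dotProduct_mulVec, mulVec_mulVec]
  exact (le_abs_self _).trans (hquad hBB hle₂ v)

theorem IsCompact.exists_riccatiCoeffBound_and_lipschitzOnWith {A B Q : ℝ → Matrix m m ℝ}
    {s : Set ℝ} (hs : IsCompact s) (hA : ContinuousOn A s) (hB : ContinuousOn B s)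
    (hQ : ContinuousOn Q s) (hQpsd : ∀ t ∈ s, (Q t).PosSemidef) :
    ∃ k, 0 ≤ k ∧ (∀ t ∈ s, RiccatiCoeffBound k (A t) (B t) (Q t)) ∧
      ∀ r, ∃ K, ∀ t ∈ s, LipschitzOnWith K (riccati (A t) (B t) (Q t)) (closedBall 0 r) := by
  obtain ⟨C, hC⟩ := hs.exists_bound_of_continuousOn (hA.prodMk (hB.prodMk hQ))
  have hABQ (t) (ht : t ∈ s) : ‖A t‖ ≤ max C 0 ∧ ‖B t‖ ≤ max C 0 ∧ ‖Q t‖ ≤ max C 0 :=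
    ⟨(norm_fst_le _).trans ((hC t ht).trans (le_max_left _ _)),
      (norm_fst_le _).trans ((norm_snd_le _).trans ((hC t ht).trans (le_max_left _ _))),
      (norm_snd_le _).trans ((norm_snd_le _).trans ((hC t ht).trans (le_max_left _ _)))⟩
  refine ⟨_, by positivity, fun t ht ↦ .of_norm_le (hQpsd t ht) (hABQ t ht).1 (hABQ t ht).2.1
    (hABQ t ht).2.2, fun r ↦ ⟨_, fun t ht ↦ lipschitzOnWith_riccati (R := r) (hABQ t ht).1
      (hABQ t ht).2.1 (hABQ t ht).2.2⟩⟩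

theorem RiccatiCoeffBound.dotProduct_riccati_mulVec_le [DecidableEq m] {φ : ℝ}
    (h : RiccatiCoeffBound k A B Q) (hX : X.IsHermitian) (hXφ : (X - φ • 1).PosSemidef)
    {v : m → ℝ} (hv : X *ᵥ v = φ • v) :
    v ⬝ᵥ riccati A B Q X *ᵥ v ≤ k * |φ| * (3 + |φ|) * (v ⬝ᵥ v) := by
  set w := Bᵀ *ᵥ v
  have hw : φ * (w ⬝ᵥ w) ≤ w ⬝ᵥ X *ᵥ w := by
    simpa [sub_mulVec, smul_mulVec] using hXφ.dotProduct_mulVec_nonneg w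
  have hA : φ * (v ⬝ᵥ A *ᵥ v) ≤ |φ| * (k * (v ⬝ᵥ v)) := (le_abs_self _).trans (by
    rw [abs_mul]; exact mul_le_mul_of_nonneg_left (h.abs_quad_le v) (abs_nonneg φ))
  have hB : -(w ⬝ᵥ X *ᵥ w) ≤ |φ| * (k * (v ⬝ᵥ v)) := by
    have hww : 0 ≤ w ⬝ᵥ w := by simpa using dotProduct_self_star_nonneg w
    nlinarith [neg_abs_le φ, h.transpose_mulVec_quad_le v, abs_nonneg φ]
  have hQ : φ ^ 2 * (v ⬝ᵥ Q *ᵥ v) ≤ |φ| ^ 2 * (k * (v ⬝ᵥ v)) := by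
    rw [sq_abs]
    exact mul_le_mul_of_nonneg_left (h.quad_le v) (sq_nonneg φ)
  rw [dotProduct_riccati_mulVec_of_mulVec_eq_smul hX hv]
  linarith

theorem RiccatiCoeffBound.neg_le_dotProduct_riccati_mulVec [DecidableEq m] {u : ℝ}
    (h : RiccatiCoeffBound k A B Q) (hX : X.IsHermitian) (hXu : (u • 1 - X).PosSemidef)
    (hu : 0 ≤ u) {v : m → ℝ} (hv : X *ᵥ v = u • v) :
    -(3 * k * u * (v ⬝ᵥ v)) ≤ v ⬝ᵥ riccati A B Q X *ᵥ v := by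
  set w := Bᵀ *ᵥ v
  have hw : w ⬝ᵥ X *ᵥ w ≤ u * (w ⬝ᵥ w) := by
    simpa [sub_mulVec, smul_mulVec] using hXu.dotProduct_mulVec_nonneg w
  have hA : -(2 * u * (k * (v ⬝ᵥ v))) ≤ 2 * u * (v ⬝ᵥ A *ᵥ v) := by
    rw [← mul_neg]
    gcongr
    exact neg_le_of_abs_le (h.abs_quad_le v)
  have hB : w ⬝ᵥ X *ᵥ w ≤ u * (k * (v ⬝ᵥ v)) :=
    hw.trans (mul_le_mul_of_nonneg_left (h.transpose_mulVec_quad_le v) hu)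
  have hQ : 0 ≤ u ^ 2 * (v ⬝ᵥ Q *ᵥ v) :=
    mul_nonneg (sq_nonneg u) (by simpa using h.posSemidef.dotProduct_mulVec_nonneg v)
  rw [dotProduct_riccati_mulVec_of_mulVec_eq_smul hX hv]
  linarith

end RiccatiComparison

theorem hasDerivAt_mul_exp_mul_sub (c κ t₀ s : ℝ) :
    HasDerivAt (fun s ↦ c * exp (κ * (t₀ - s))) (-(κ * (c * exp (κ * (t₀ - s))))) s :=
  ((((hasDerivAt_id s).const_sub t₀).const_mul κ).exp.const_mul c).congr_deriv (by simp; ring)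

section RiccatiSolutions

variable {m : Type*} [Fintype m] {A B Q X : ℝ → Matrix m m ℝ} {τ T k : ℝ}

theorem SolvesRiccatiOn.posDef_sub_smul_one [DecidableEq m] (hX : SolvesRiccatiOn A B Q X (Icc τ T))
    (hherm : ∀ t ∈ Icc τ T, (X t).IsHermitian)
    (hcoef : ∀ t ∈ Icc τ T, RiccatiCoeffBound k (A t) (B t) (Q t))
    {φ φ' : ℝ → ℝ} (hφ : ∀ t ∈ Icc τ T, HasDerivAt φ (φ' t) t)
    (hφ' : ∀ t ∈ Ico τ T, k * |φ t| * (3 + |φ t|) < φ' t) (hT : (X T - φ T • 1).PosDef) :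
    ∀ t ∈ Icc τ T, (X t - φ t • 1).PosDef := by
  refine posDef_of_hasDerivWithinAt (M' := fun t ↦ riccati (A t) (B t) (Q t) (X t) - φ' t • 1)
    (fun t ht ↦ (hX t ht).sub ((hφ t ht).hasDerivWithinAt.smul_const 1))
    (fun t ht ↦ (hherm t ht).sub (isHermitian_one.smul (.all _))) hT fun t ht hpsd v hv hker ↦ ?_
  have ht' := Ico_subset_Icc_self ht
  have hXv : X t *ᵥ v = φ t • v := by
    rwa [sub_mulVec, smul_mulVec, one_mulVec, sub_eq_zero] at hker
  have hRic := (hcoef t ht').dotProduct_riccati_mulVec_le (hherm t ht') hpsd hXv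
  have hvv := dotProduct_self_pos_of_ne_zero hv
  rw [sub_mulVec, dotProduct_sub, smul_mulVec, one_mulVec, dotProduct_smul, smul_eq_mul]
  nlinarith [hφ' t ht]

theorem SolvesRiccatiOn.posDef_smul_one_sub [DecidableEq m] (hX : SolvesRiccatiOn A B Q X (Icc τ T))
    (hherm : ∀ t ∈ Icc τ T, (X t).IsHermitian)
    (hcoef : ∀ t ∈ Icc τ T, RiccatiCoeffBound k (A t) (B t) (Q t))
    {u u' : ℝ → ℝ} (hu : ∀ t ∈ Icc τ T, HasDerivAt u (u' t) t) (hu0 : ∀ t ∈ Ico τ T, 0 ≤ u t)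
    (hu' : ∀ t ∈ Ico τ T, u' t < -(3 * k * u t)) (hT : (u T • 1 - X T).PosDef) :
    ∀ t ∈ Icc τ T, (u t • 1 - X t).PosDef := by
  refine posDef_of_hasDerivWithinAt (M' := fun t ↦ u' t • 1 - riccati (A t) (B t) (Q t) (X t))
    (fun t ht ↦ ((hu t ht).hasDerivWithinAt.smul_const 1).sub (hX t ht))
    (fun t ht ↦ (isHermitian_one.smul (.all _)).sub (hherm t ht)) hT fun t ht hpsd v hv hker ↦ ?_
  have ht' := Ico_subset_Icc_self ht
  have hXv : X t *ᵥ v = u t • v := by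
    rwa [sub_mulVec, smul_mulVec, one_mulVec, sub_eq_zero, eq_comm] at hker
  have hRic := (hcoef t ht').neg_le_dotProduct_riccati_mulVec (hherm t ht') hpsd (hu0 t ht) hXv
  have hvv := dotProduct_self_pos_of_ne_zero hv
  rw [sub_mulVec, dotProduct_sub, smul_mulVec, one_mulVec, dotProduct_smul, smul_eq_mul]
  nlinarith [hu' t ht]

theorem SolvesRiccatiOn.isHermitian (hX : SolvesRiccatiOn A B Q X (Icc τ T))
    (hlip : ∀ R, ∃ K, ∀ t ∈ Icc τ T, LipschitzOnWith K (riccati (A t) (B t) (Q t)) (closedBall 0 R))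
    (hQ : ∀ t ∈ Icc τ T, (Q t).IsHermitian) (hT : (X T).IsHermitian) :
    ∀ t ∈ Icc τ T, (X t).IsHermitian := by
  have hXt : SolvesRiccatiOn A B Q (fun t ↦ (X t)ᵀ) (Icc τ T) := fun t ht ↦ by
    simpa [riccati_transpose (hQ t ht)] using (hX t ht).matrix_transpose
  exact fun t ht ↦ eqOn_Icc_of_hasDerivWithinAt_of_lipschitzOnWith hlip hXt hX hT ht

theorem SolvesRiccatiOn.posSemidef [DecidableEq m] (hX : SolvesRiccatiOn A B Q X (Icc τ T))
    (hherm : ∀ t ∈ Icc τ T, (X t).IsHermitian)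
    (hcoef : ∀ t ∈ Icc τ T, RiccatiCoeffBound k (A t) (B t) (Q t)) (hk : 0 ≤ k)
    (hT : (X T).PosSemidef) : ∀ t ∈ Icc τ T, (X t).PosSemidef := by
  intro t ht
  set κ := 4 * k + 1
  refine .of_eventually_posDef_add_smul_one (hherm t ht) ?_
  filter_upwards [Ioo_mem_nhdsGT (exp_pos (-(κ * (t - τ))))] with δ hδ
  have hsmall : ∀ s ∈ Icc τ T, δ * exp (κ * (t - s)) ≤ 1 := fun s hs ↦ by
    calc δ * exp (κ * (t - s)) ≤ exp (-(κ * (t - τ))) * exp (κ * (t - τ)) := by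
          gcongr
          · exact hδ.2.le
          · nlinarith [hs.1]
      _ = 1 := by rw [← exp_add]; simp
  -- compare with the barrier `φ s = -δ e^{κ (t - s)}`, which equals `-δ` at `t`
  have := hX.posDef_sub_smul_one hherm hcoef (fun s _ ↦ hasDerivAt_mul_exp_mul_sub (-δ) κ t s)
    (fun s hs ↦ ?_) ?_ t ht
  · simpa using this
  · set e := δ * exp (κ * (t - s))
    have hpos : 0 < e := mul_pos hδ.1 (exp_pos _)
    have hle : e ≤ 1 := hsmall s (Ico_subset_Icc_self hs)
    rw [show -δ * exp (κ * (t - s)) = -e by ring, abs_neg, abs_of_pos hpos]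
    nlinarith [mul_le_mul_of_nonneg_left hle (mul_nonneg hk hpos.le)]
  · simpa [add_comm] using (PosDef.one.smul (mul_pos hδ.1 (exp_pos _))).add_posSemidef hT

theorem SolvesRiccatiOn.posDef [DecidableEq m] (hX : SolvesRiccatiOn A B Q X (Icc τ T))
    (hherm : ∀ t ∈ Icc τ T, (X t).IsHermitian)
    (hcoef : ∀ t ∈ Icc τ T, RiccatiCoeffBound k (A t) (B t) (Q t)) (hk : 0 ≤ k)
    (hT : (X T).PosDef) : ∀ t ∈ Icc τ T, (X t).PosDef := by
  obtain ⟨δ, hδ, hTδ⟩ := hT.exists_pos_posDef_sub_smul_one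
  set κ := k * (3 + δ) + 1
  have := hX.posDef_sub_smul_one hherm hcoef
    (fun s _ ↦ hasDerivAt_mul_exp_mul_sub δ (-κ) T s) (fun s hs ↦ ?_) (by simpa using hTδ)
  · intro t ht
    have hpos : 0 ≤ δ * exp (-κ * (T - t)) := by positivity
    simpa using (this t ht).add_posSemidef (PosSemidef.one.smul hpos)
  · set e := δ * exp (-κ * (T - s))
    have hpos : 0 < e := by positivity
    have hle : e ≤ δ := by
      refine mul_le_of_le_one_right hδ.le (exp_le_one_iff.2 ?_)
      nlinarith [hs.2, show 0 < κ by positivity]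
    rw [abs_of_pos hpos]
    nlinarith [mul_le_mul_of_nonneg_left hle (mul_nonneg hk hpos.le)]

theorem SolvesRiccatiOn.norm_le [DecidableEq m] (hX : SolvesRiccatiOn A B Q X (Icc τ T))
    (hherm : ∀ t ∈ Icc τ T, (X t).IsHermitian)
    (hcoef : ∀ t ∈ Icc τ T, RiccatiCoeffBound k (A t) (B t) (Q t))
    (hpsd : ∀ t ∈ Icc τ T, (X t).PosSemidef) (hτT : τ ≤ T) :
    ∀ t ∈ Icc τ T, ‖X t‖ ≤ (Fintype.card m * ‖X T‖ + 1) * exp ((3 * k + 1) * (T - t)) := by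
  set U := Fintype.card m * ‖X T‖ + 1
  have hU : 0 < U := by positivity
  have := hX.posDef_smul_one_sub hherm hcoef
    (fun s _ ↦ hasDerivAt_mul_exp_mul_sub U (3 * k + 1) T s) (fun s _ ↦ by positivity)
    (fun s _ ↦ by nlinarith [mul_pos hU (exp_pos ((3 * k + 1) * (T - s)))])
    (by simpa using (hherm T (right_mem_Icc.2 hτT)).posDef_smul_one_sub (lt_add_one _))
  exact fun t ht ↦
    (hpsd t ht).norm_le_of_posSemidef_smul_one_sub (by positivity) (this t ht).posSemidef

end RiccatiSolutions

/-- Deterministic specialization of Lemma 4.2: global solvability of the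
definite matrix Riccati equation. `Atil` and `Qtil` play the roles of Ã and Q̃. -/
theorem definite_riccati_global_solvability
    (T : ℝ) (hT : 0 < T) (n : ℕ)
    (Atil B Qtil : ℝ → Matrix (Fin n) (Fin n) ℝ)
    (η : Matrix (Fin n) (Fin n) ℝ)
    (hAtil : ContinuousOn Atil (Icc 0 T)) (hB : ContinuousOn B (Icc 0 T))
    (hQtil : ContinuousOn Qtil (Icc 0 T))
    (hQtilpsd : ∀ t ∈ Icc 0 T, (Qtil t).PosSemidef)
    (hη : η.PosSemidef) :
    ∃ X : ℝ → Matrix (Fin n) (Fin n) ℝ,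
      (X T = η ∧
        (∀ t ∈ Icc 0 T,
          HasDerivWithinAt X
            (Atil t * X t + X t * (Atil t)ᵀ - B t * X t * (B t)ᵀ
              + X t * Qtil t * X t)
            (Icc 0 T) t)) ∧
      (∀ Y : ℝ → Matrix (Fin n) (Fin n) ℝ,
        (Y T = η ∧
          (∀ t ∈ Icc 0 T,
            HasDerivWithinAt Y
              (Atil t * Y t + Y t * (Atil t)ᵀ - B t * Y t * (B t)ᵀ
                + Y t * Qtil t * Y t)
              (Icc 0 T) t)) →
        EqOn Y X (Icc 0 T)) ∧
      (∀ t ∈ Icc 0 T, (X t).PosSemidef) ∧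
      (η.PosDef → ∀ t ∈ Icc 0 T, (X t).PosDef) := by
  obtain ⟨k, hk, hcoef, hlip⟩ :=
    isCompact_Icc.exists_riccatiCoeffBound_and_lipschitzOnWith hAtil hB hQtil hQtilpsd
  have hsol : ∀ τ ∈ Icc 0 T, ∀ X, X T = η → SolvesRiccatiOn Atil B Qtil X (Icc τ T) →
      (∀ t ∈ Icc τ T, (X t).IsHermitian) ∧ ∀ t ∈ Icc τ T, (X t).PosSemidef := by
    intro τ hτ X hXT hX
    have hsub : Icc τ T ⊆ Icc 0 T := Icc_subset_Icc_left hτ.1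
    have hherm := hX.isHermitian (fun R ↦ (hlip R).imp fun K hK t ht ↦ hK t (hsub ht))
      (fun t ht ↦ (hQtilpsd t (hsub ht)).isHermitian) (hXT ▸ hη.isHermitian)
    exact ⟨hherm, hX.posSemidef hherm (fun t ht ↦ hcoef t (hsub ht)) hk (hXT ▸ hη)⟩
  obtain ⟨X, hXT, hX⟩ := exists_solvesRiccatiOn hT.le hAtil hB hQtil hlip η
    (R := (Fintype.card (Fin n) * ‖η‖ + 1) * exp ((3 * k + 1) * T)) fun τ hτ Y hYT hY ↦ by
      obtain ⟨hherm, hpsd⟩ := hsol τ hτ Y hYT hY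
      calc ‖Y τ‖ ≤ _ := hY.norm_le hherm (fun t ht ↦ hcoef t (Icc_subset_Icc_left hτ.1 ht)) hpsd
            hτ.2 τ (left_mem_Icc.2 hτ.2)
        _ ≤ _ := by rw [hYT]; gcongr; linarith [hτ.1]
  obtain ⟨hherm, hpsd⟩ := hsol 0 (left_mem_Icc.2 hT.le) X hXT hX
  exact ⟨X, ⟨hXT, hX⟩, fun Y hY ↦ eqOn_Icc_of_hasDerivWithinAt_of_lipschitzOnWith hlip hY.2 hX
    (hY.1.trans hXT.symm), hpsd, fun hηpd ↦ hX.posDef hherm hcoef hk (hXT ▸ hηpd)⟩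
end

section
/- Deterministic specialization of Lemma 4.1: the solutions of the two coupled Riccati-type equations are mutually inverse. Let T > 0 and let Ã, B, Q̃ : [0,T] → M_n(ℝ) be continuous. Suppose X, K : [0,T] → M_n(ℝ) are continuously differentiable, satisfy X'(t) = Ã(t)X(t) + X(t)Ã(t)' − B(t)X(t)B(t)' + X(t)Q̃(t)X(t) and K'(t) = −[K(t)Ã(t) + Ã(t)'K(t) + Q̃(t)] + K(t)B(t)X(t)B(t)'K(t) for all t ∈ [0,T], and satisfy K(T)X(T) = I. Then K(t)X(t) = X(t)K(t) = I for all t ∈ [0,T]. -/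
/-!
`Z = K X - 1` satisfies the linear homogeneous equation
`Z' = (K B X Bᵀ - Ãᵀ) Z + Z (Ãᵀ + Q̃ X)`, whose coefficients are continuous, hence bounded
on `[0, T]`. Since `Z T = 0`, Grönwall's inequality run backwards from `T` gives `Z = 0`, i.e.
`K X = 1`; for square matrices this forces `X K = 1` as well.
-/

open Matrix Set

attribute [local instance] Matrix.normedAddCommGroup Matrix.normedSpace

theorem Matrix.norm_mul_le_card_mul {l m n α : Type*} [Fintype l] [Fintype m] [Fintype n]
    [NonUnitalNormedRing α] (A : Matrix l m α) (B : Matrix m n α) :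
    ‖A * B‖ ≤ Fintype.card m * ‖A‖ * ‖B‖ := by
  refine (Matrix.norm_le_iff (by positivity)).2 fun i j => ?_
  calc ‖(A * B) i j‖ ≤ ∑ k, ‖A i k * B k j‖ := by
        rw [Matrix.mul_apply]; exact norm_sum_le _ _
    _ ≤ ∑ _k : m, ‖A‖ * ‖B‖ := by
        gcongr with k
        exact (norm_mul_le _ _).trans (mul_le_mul (norm_entry_le_entrywise_sup_norm A)
          (norm_entry_le_entrywise_sup_norm B) (norm_nonneg _) (norm_nonneg _))
    _ = Fintype.card m * ‖A‖ * ‖B‖ := by simp [mul_assoc]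

theorem Matrix.isBoundedBilinearMap_mul {𝕜 l m n : Type*} [NormedField 𝕜]
    [Fintype l] [Fintype m] [Fintype n] :
    IsBoundedBilinearMap 𝕜 fun p : Matrix l m 𝕜 × Matrix m n 𝕜 => p.1 * p.2 where
  add_left := Matrix.add_mul
  smul_left := Matrix.smul_mul
  add_right := Matrix.mul_add
  smul_right c A B := Matrix.mul_smul A c B
  bound := ⟨Fintype.card m + 1, by positivity, fun A B =>
    (norm_mul_le_card_mul A B).trans (by gcongr; simp)⟩

theorem HasDerivWithinAt.matrix_mul {𝕜 l m n : Type*} [NontriviallyNormedField 𝕜]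
    [Fintype l] [Fintype m] [Fintype n]
    {f : 𝕜 → Matrix l m 𝕜} {g : 𝕜 → Matrix m n 𝕜}
    {f' : Matrix l m 𝕜} {g' : Matrix m n 𝕜} {s : Set 𝕜} {t : 𝕜}
    (hf : HasDerivWithinAt f f' s t) (hg : HasDerivWithinAt g g' s t) :
    HasDerivWithinAt (fun u => f u * g u) (f t * g' + f' * g t) s t := by
  exact (isBoundedBilinearMap_mul.hasFDerivAt (f t, g t)).comp_hasDerivWithinAt t (hf.prodMk hg)

theorem eqOn_zero_of_norm_deriv_le_mul_norm_of_eq_zero_right {E : Type*} [NormedAddCommGroup E]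
    [NormedSpace ℝ E] {f f' : ℝ → E} {K a b : ℝ}
    (hf : ∀ t ∈ Icc a b, HasDerivWithinAt f (f' t) (Icc a b) t) (hb : f b = 0)
    (bound : ∀ t ∈ Icc a b, ‖f' t‖ ≤ K * ‖f t‖) :
    EqOn f 0 (Icc a b) := by
  -- Mathlib's Grönwall uniqueness starts at the left endpoint; reflect `[a, b]` by `s ↦ a + b - s`.
  have hrefl : MapsTo (fun s => a + b - s) (Icc a b) (Icc a b) := fun s hs =>
    ⟨by linarith [hs.2], by linarith [hs.1]⟩
  have hg : ∀ s ∈ Icc a b, HasDerivWithinAt (fun s => f (a + b - s)) (-f' (a + b - s))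
      (Icc a b) s := fun s hs => by
    simpa [Function.comp_def] using
      (hf _ (hrefl hs)).scomp s ((hasDerivWithinAt_id s _).const_sub (a + b)) hrefl
  have hg0 := eq_zero_of_abs_deriv_le_mul_abs_self_of_eq_zero_right (K := K)
    (fun s hs => (hg s hs).continuousWithinAt)
    (fun s hs => (hg s (Ico_subset_Icc_self hs)).mono_of_mem_nhdsWithin
      (Filter.mem_of_superset (Icc_mem_nhdsGE hs.2) (Icc_subset_Icc_left hs.1)))
    (by simpa using hb) (fun s hs => by simpa using bound _ (hrefl (Ico_subset_Icc_self hs)))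
  intro t ht
  simpa using hg0 _ (hrefl ht)

theorem Matrix.eqOn_zero_of_hasDerivWithinAt_mul_add_mul {m n : Type*}
    [Fintype m] [Fintype n] {L : ℝ → Matrix m m ℝ} {M : ℝ → Matrix n n ℝ}
    {Z : ℝ → Matrix m n ℝ} {a b : ℝ}
    (hL : ContinuousOn L (Icc a b)) (hM : ContinuousOn M (Icc a b))
    (hZ : ∀ t ∈ Icc a b, HasDerivWithinAt Z (L t * Z t + Z t * M t) (Icc a b) t)
    (hb : Z b = 0) :
    EqOn Z 0 (Icc a b) := by
  obtain ⟨CL, hCL⟩ := isCompact_Icc.exists_bound_of_continuousOn hL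
  obtain ⟨CM, hCM⟩ := isCompact_Icc.exists_bound_of_continuousOn hM
  refine eqOn_zero_of_norm_deriv_le_mul_norm_of_eq_zero_right
    (K := Fintype.card m * CL + Fintype.card n * CM) hZ hb fun t ht => ?_
  calc ‖L t * Z t + Z t * M t‖
        ≤ Fintype.card m * ‖L t‖ * ‖Z t‖ + Fintype.card n * ‖Z t‖ * ‖M t‖ :=
        (norm_add_le _ _).trans (add_le_add (norm_mul_le_card_mul _ _) (norm_mul_le_card_mul _ _))
    _ ≤ Fintype.card m * CL * ‖Z t‖ + Fintype.card n * ‖Z t‖ * CM := by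
        gcongr
        exacts [hCL t ht, hCM t ht]
    _ = (Fintype.card m * CL + Fintype.card n * CM) * ‖Z t‖ := by ring

theorem coupled_riccati_solutions_mutually_inverse_general
    (T : ℝ) (n : ℕ)
    (Atil B Qtil X K : ℝ → Matrix (Fin n) (Fin n) ℝ)
    (hAtil : ContinuousOn Atil (Icc 0 T)) (hB : ContinuousOn B (Icc 0 T))
    (hQtil : ContinuousOn Qtil (Icc 0 T))
    (hXderiv : ∀ t ∈ Icc 0 T,
      HasDerivWithinAt X
        (Atil t * X t + X t * (Atil t)ᵀ - B t * X t * (B t)ᵀ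
          + X t * Qtil t * X t)
        (Icc 0 T) t)
    (hKderiv : ∀ t ∈ Icc 0 T,
      HasDerivWithinAt K
        (-(K t * Atil t + (Atil t)ᵀ * K t + Qtil t)
          + K t * B t * X t * (B t)ᵀ * K t)
        (Icc 0 T) t)
    (hKXT : K T * X T = 1) :
    ∀ t ∈ Icc 0 T, K t * X t = 1 ∧ X t * K t = 1 := by
  have hX : ContinuousOn X (Icc 0 T) := fun t ht => (hXderiv t ht).continuousWithinAt
  have hK : ContinuousOn K (Icc 0 T) := fun t ht => (hKderiv t ht).continuousWithinAt
  have hAtilT : ContinuousOn (fun t => (Atil t)ᵀ) (Icc 0 T) :=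
    continuous_id.matrix_transpose.comp_continuousOn hAtil
  have hBT : ContinuousOn (fun t => (B t)ᵀ) (Icc 0 T) :=
    continuous_id.matrix_transpose.comp_continuousOn hB
  have hKX : EqOn (fun t => K t * X t - 1) 0 (Icc 0 T) := by
    refine Matrix.eqOn_zero_of_hasDerivWithinAt_mul_add_mul
      (L := fun t => K t * B t * X t * (B t)ᵀ - (Atil t)ᵀ)
      (M := fun t => (Atil t)ᵀ + Qtil t * X t)
      ((((hK.mul hB).mul hX).mul hBT).sub hAtilT) (hAtilT.add (hQtil.mul hX))
      (fun t ht => ?_) (by simp [hKXT])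
    refine (((hKderiv t ht).matrix_mul (hXderiv t ht)).sub_const 1).congr_deriv ?_
    noncomm_ring
  intro t ht
  have hKXt : K t * X t = 1 := sub_eq_zero.1 (hKX ht)
  exact ⟨hKXt, mul_eq_one_comm.1 hKXt⟩

/-- Deterministic specialization of Lemma 4.1: the solutions of the two coupled
Riccati-type equations are mutually inverse. `Atil` and `Qtil` play the roles
of Ã and Q̃. -/
theorem coupled_riccati_solutions_mutually_inverse
    (T : ℝ) (hT : 0 < T) (n : ℕ)
    (Atil B Qtil X K : ℝ → Matrix (Fin n) (Fin n) ℝ)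
    (hAtil : ContinuousOn Atil (Icc 0 T)) (hB : ContinuousOn B (Icc 0 T))
    (hQtil : ContinuousOn Qtil (Icc 0 T))
    (hXderiv : ∀ t ∈ Icc 0 T,
      HasDerivWithinAt X
        (Atil t * X t + X t * (Atil t)ᵀ - B t * X t * (B t)ᵀ
          + X t * Qtil t * X t)
        (Icc 0 T) t)
    (hKderiv : ∀ t ∈ Icc 0 T,
      HasDerivWithinAt K
        (-(K t * Atil t + (Atil t)ᵀ * K t + Qtil t)
          + K t * B t * X t * (B t)ᵀ * K t)
        (Icc 0 T) t)
    (hKXT : K T * X T = 1) :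
    ∀ t ∈ Icc 0 T, K t * X t = 1 ∧ X t * K t = 1 :=
  coupled_riccati_solutions_mutually_inverse_general T n Atil B Qtil X K hAtil hB hQtil hXderiv
    hKderiv hKXT
end

section
/- Deterministic specialization of Lemma 3.2: exponential lower bound for the linear matrix equation. Let T > 0, δ > 0, and let Â, Q̂, Ĉ₁, …, Ĉ_k, Ê₁, …, Ê_m : [0,T] → M_n(ℝ) be continuous, with Q̂(t) symmetric positive semidefinite for all t. Let Ĥ ∈ M_n(ℝ) be symmetric with Ĥ ≥ δI. Let Y : [0,T] → M_n(ℝ) be continuously differentiable with Y(T) = Ĥ and Y'(t) = −[Y(t)Â(t) + Â(t)'Y(t) + Σ_{i=1}^m Êᵢ(t)'Y(t)Êᵢ(t) + Σ_{j=1}^k Ĉⱼ(t)'Y(t)Ĉⱼ(t) + Q̂(t)] for all t ∈ [0,T]. Define β := max{0, sup over s ∈ [0,T] and unit vectors v ∈ ℝⁿ of −2v'Â(s)v}. Then Y(t) ≥ δe^{−β(T−t)}I for all t ∈ [0,T]. -/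
open Matrix Set Filter Topology

attribute [local instance] Matrix.normedAddCommGroup Matrix.normedSpace

/-!
The solution `Y` is symmetric, because `Yᵀ - Y` solves a linear equation with zero terminal
value. For `0 < ε < δ` put `c(t) = (δ - ε) e^{-(β + ε)(T - t)}`, so that `Y(T) - c(T) I ≥ ε I`.
If `Y - c I` fails to be positive definite somewhere, take the last time `t₁ < T` at which some
unit quadratic form `v'(Y - c I)v` is nonpositive. Then `Y(t₁) ≥ c(t₁) I` and `Y(t₁) v = c(t₁) v`,
so the sandwich terms and `Q̂` contribute nonpositively and
`d/dt v'(Y - c I)v ≤ -2 c v'Âv - (β + ε) c ≤ -ε c < 0` at `t₁`, although `v'(Y - c I)v` vanishes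
at `t₁` and is positive just after it. Letting `ε → 0` gives the bound.
-/

theorem IsMinOn.hasDerivWithinAt_nonneg_Icc {g : ℝ → ℝ} {g' a b : ℝ} (hab : a < b)
    (hmin : IsMinOn g (Icc a b) a) (hg : HasDerivWithinAt g g' (Icc a b) a) : 0 ≤ g' := by
  have hdir : b - a ∈ posTangentConeAt (Icc a b) a :=
    sub_mem_posTangentConeAt_of_segment_subset (segment_eq_Icc hab.le ▸ Subset.rfl)
  have := hmin.localize.hasFDerivWithinAt_nonneg hg hdir
  rw [ContinuousLinearMap.toSpanSingleton_apply, smul_eq_mul] at this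
  exact nonneg_of_mul_nonneg_right this (sub_pos.2 hab)

theorem eqOn_zero_of_hasDerivWithinAt_clm_apply_of_eq_zero_right {E : Type*}
    [NormedAddCommGroup E] [NormedSpace ℝ E] {L : ℝ → E →L[ℝ] E} {f : ℝ → E} {a b : ℝ}
    (hL : ContinuousOn L (Icc a b))
    (hf : ∀ t ∈ Icc a b, HasDerivWithinAt f (L t (f t)) (Icc a b) t) (hb : f b = 0) :
    EqOn f 0 (Icc a b) := by
  obtain ⟨K, hK⟩ := isCompact_Icc.exists_bound_of_continuousOn hL
  refine ODE_solution_unique_of_mem_Icc_left (v := fun t => L t) (s := fun _ => univ)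
    (K := K.toNNReal) (fun t ht => ?_) (fun t ht => (hf t ht).continuousWithinAt)
    (fun t ht => (hf t (Ioc_subset_Icc_self ht)).mono_of_mem_nhdsWithin
      (Icc_mem_nhdsLE_of_mem ht))
    (fun _ _ => mem_univ _) continuousOn_const (fun t _ => ?_) (fun _ _ => mem_univ _) hb
  · refine ((L t).lipschitz.weaken ?_).lipschitzOnWith
    rw [← NNReal.coe_le_coe, Real.coe_toNNReal', coe_nnnorm]
    exact (hK t (Ioc_subset_Icc_self ht)).trans (le_max_left _ _)
  · rw [Pi.zero_apply, map_zero]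
    exact hasDerivWithinAt_const t (Iic t) (0 : E)

theorem ContinuousOn.dotProduct_mulVec {X ι : Type*} [TopologicalSpace X] [Fintype ι]
    {A : X → Matrix ι ι ℝ} {w : X → ι → ℝ} {s : Set X} (hA : ContinuousOn A s)
    (hw : ContinuousOn w s) : ContinuousOn (fun x => w x ⬝ᵥ (A x *ᵥ w x)) s :=
  Continuous.comp_continuousOn (g := fun q : Matrix ι ι ℝ × (ι → ℝ) => q.2 ⬝ᵥ (q.1 *ᵥ q.2))
    (by fun_prop) (hA.prodMk hw)

namespace Matrix

variable {ι κ μ : Type*} [Fintype ι] [Fintype κ] [Fintype μ]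

theorem exists_eq_smul_of_ne_zero {v : ι → ℝ} (hv : v ≠ 0) :
    ∃ r : ℝ, 0 < r ∧ ∃ u : ι → ℝ, u ⬝ᵥ u = 1 ∧ v = r • u := by
  have hvv : 0 < v ⬝ᵥ v :=
    lt_of_le_of_ne (Finset.sum_nonneg fun i _ => mul_self_nonneg (v i))
      (Ne.symm (dotProduct_self_eq_zero.not.mpr hv))
  set r := √(v ⬝ᵥ v)
  have hr : 0 < r := Real.sqrt_pos.mpr hvv
  refine ⟨r, hr, r⁻¹ • v, ?_, by rw [smul_smul, mul_inv_cancel₀ hr.ne', one_smul]⟩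
  rw [smul_dotProduct, dotProduct_smul, smul_eq_mul, smul_eq_mul, ← mul_assoc,
    ← mul_inv, ← sq, Real.sq_sqrt hvv.le, inv_mul_cancel₀ hvv.ne']

theorem smul_dotProduct_mulVec_smul (M : Matrix ι ι ℝ) (r : ℝ) (u : ι → ℝ) :
    (r • u) ⬝ᵥ (M *ᵥ (r • u)) = r ^ 2 * (u ⬝ᵥ (M *ᵥ u)) := by
  rw [mulVec_smul, smul_dotProduct, dotProduct_smul, smul_eq_mul, smul_eq_mul]; ring

theorem isCompact_setOf_dotProduct_self_eq_one :
    IsCompact {v : ι → ℝ | v ⬝ᵥ v = 1} := by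
  refine Metric.isCompact_of_isClosed_isBounded
    (isClosed_eq (continuous_id.dotProduct continuous_id) continuous_const) ?_
  refine (Metric.isBounded_closedBall (x := (0 : ι → ℝ)) (r := 1)).subset fun v hv => ?_
  rw [mem_closedBall_zero_iff, pi_norm_le_iff_of_nonneg zero_le_one]
  intro i
  rw [Real.norm_eq_abs, ← sq_le_one_iff_abs_le_one, sq, ← hv.out]
  exact Finset.single_le_sum (f := fun j => v j * v j) (fun j _ => mul_self_nonneg _)
    (Finset.mem_univ i)

theorem posSemidef_of_forall_unit {M : Matrix ι ι ℝ} (hM : M.IsHermitian)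
    (h : ∀ u, u ⬝ᵥ u = 1 → 0 ≤ u ⬝ᵥ (M *ᵥ u)) : M.PosSemidef := by
  refine .of_dotProduct_mulVec_nonneg hM fun v => ?_
  rw [star_trivial]
  rcases eq_or_ne v 0 with rfl | hv
  · simp
  obtain ⟨r, -, u, hu, rfl⟩ := exists_eq_smul_of_ne_zero hv
  rw [smul_dotProduct_mulVec_smul]
  exact mul_nonneg (sq_nonneg r) (h u hu)

theorem posDef_of_forall_unit {M : Matrix ι ι ℝ} (hM : M.IsHermitian)
    (h : ∀ u, u ⬝ᵥ u = 1 → 0 < u ⬝ᵥ (M *ᵥ u)) : M.PosDef := by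
  refine .of_dotProduct_mulVec_pos hM fun v hv => ?_
  rw [star_trivial]
  obtain ⟨r, hr, u, hu, rfl⟩ := exists_eq_smul_of_ne_zero hv
  rw [smul_dotProduct_mulVec_smul]
  exact mul_pos (pow_pos hr 2) (h u hu)

theorem isClosed_setOf_posSemidef : IsClosed {M : Matrix ι ι ℝ | M.PosSemidef} := by
  have : {M : Matrix ι ι ℝ | M.PosSemidef} =
      {M | Mᴴ = M} ∩ ⋂ x : ι → ℝ, {M | 0 ≤ star x ⬝ᵥ (M *ᵥ x)} := by
    ext M; simp [posSemidef_iff_dotProduct_mulVec, IsHermitian]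
  rw [this]
  exact (isClosed_eq (by fun_prop) continuous_id).inter
    (isClosed_iInter fun x => isClosed_le continuous_const (by fun_prop))

theorem neg_two_mul_dotProduct_mulVec_le_sSup {A : ℝ → Matrix ι ι ℝ} {s : Set ℝ}
    (hs : IsCompact s) (hA : ContinuousOn A s) {t : ℝ} (ht : t ∈ s) {v : ι → ℝ}
    (hv : v ⬝ᵥ v = 1) :
    -(2 * (v ⬝ᵥ (A t *ᵥ v))) ≤
      sSup {x : ℝ | ∃ s' ∈ s, ∃ u : ι → ℝ, u ⬝ᵥ u = 1 ∧ x = -(2 * (u ⬝ᵥ (A s' *ᵥ u)))} := by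
  refine le_csSup ?_ ⟨t, ht, v, hv, rfl⟩
  have hcont : ContinuousOn (fun p : ℝ × (ι → ℝ) => -(2 * (p.2 ⬝ᵥ (A p.1 *ᵥ p.2))))
      (s ×ˢ {u | u ⬝ᵥ u = 1}) :=
    (continuousOn_const.mul ((hA.comp continuousOn_fst fun p hp => hp.1).dotProduct_mulVec
      continuousOn_snd)).neg
  refine ((hs.prod isCompact_setOf_dotProduct_self_eq_one).image_of_continuousOn
    hcont).bddAbove.mono ?_
  rintro x ⟨s', hs', u, hu, rfl⟩
  exact ⟨(s', u), ⟨hs', hu⟩, rfl⟩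

noncomputable def quadFormCLM (v : ι → ℝ) : Matrix ι ι ℝ →L[ℝ] ℝ :=
  LinearMap.toContinuousLinearMap
    { toFun := fun M => v ⬝ᵥ (M *ᵥ v)
      map_add' := fun M N => by simp [add_mulVec, dotProduct_add]
      map_smul' := fun c M => by simp [smul_mulVec, dotProduct_smul] }

theorem exists_last_dotProduct_mulVec_nonpos {Z : ℝ → Matrix ι ι ℝ} {a b t₀ : ℝ}
    (hZ : ContinuousOn Z (Icc a b)) (ht₀ : t₀ ∈ Icc a b) {v₀ : ι → ℝ} (hv₀ : v₀ ⬝ᵥ v₀ = 1)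
    (hv₀Z : v₀ ⬝ᵥ (Z t₀ *ᵥ v₀) ≤ 0) :
    ∃ t₁ ∈ Icc t₀ b, ∃ v : ι → ℝ, v ⬝ᵥ v = 1 ∧ v ⬝ᵥ (Z t₁ *ᵥ v) ≤ 0 ∧
      ∀ t ∈ Ioc t₁ b, ∀ u : ι → ℝ, u ⬝ᵥ u = 1 → 0 < u ⬝ᵥ (Z t *ᵥ u) := by
  set S := {v : ι → ℝ | v ⬝ᵥ v = 1}
  have hS : IsCompact S := isCompact_setOf_dotProduct_self_eq_one
  set K := (Icc t₀ b ×ˢ S) ∩ (fun p : ℝ × (ι → ℝ) => p.2 ⬝ᵥ (Z p.1 *ᵥ p.2)) ⁻¹' Iic 0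
  have hK : IsCompact K := by
    have hq : ContinuousOn (fun p : ℝ × (ι → ℝ) => p.2 ⬝ᵥ (Z p.1 *ᵥ p.2)) (Icc t₀ b ×ˢ S) :=
      ((hZ.mono (Icc_subset_Icc_left ht₀.1)).comp continuousOn_fst
        fun p hp => hp.1).dotProduct_mulVec continuousOn_snd
    exact (isCompact_Icc.prod hS).of_isClosed_subset
      (hq.preimage_isClosed_of_isClosed (isClosed_Icc.prod hS.isClosed) isClosed_Iic)
      inter_subset_left
  obtain ⟨⟨t₁, v⟩, ⟨⟨ht₁, hv⟩, hvZ⟩, hmax⟩ :=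
    hK.exists_isMaxOn ⟨(t₀, v₀), ⟨⟨left_mem_Icc.2 ht₀.2, hv₀⟩, hv₀Z⟩⟩ continuousOn_fst
  refine ⟨t₁, ht₁, v, hv, hvZ, fun t ht u hu => ?_⟩
  by_contra! h
  exact (hmax (a := (t, u)) ⟨⟨⟨ht₁.1.trans ht.1.le, ht.2⟩, hu⟩, h⟩).not_gt ht.1

theorem posDef_of_hasDerivWithinAt_of_touching {Z Z' : ℝ → Matrix ι ι ℝ} {a b : ℝ}
    (hZ : ∀ t ∈ Icc a b, HasDerivWithinAt Z (Z' t) (Icc a b) t)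
    (hherm : ∀ t ∈ Icc a b, (Z t).IsHermitian) (hb : (Z b).PosDef)
    (htouch : ∀ t ∈ Ico a b, (Z t).PosSemidef → ∀ v : ι → ℝ, v ⬝ᵥ v = 1 →
      v ⬝ᵥ (Z t *ᵥ v) = 0 → v ⬝ᵥ (Z' t *ᵥ v) < 0) :
    ∀ t ∈ Icc a b, (Z t).PosDef := by
  intro t₀ ht₀
  by_contra hnot
  obtain ⟨v₀, hv₀, hv₀Z⟩ : ∃ u : ι → ℝ, u ⬝ᵥ u = 1 ∧ u ⬝ᵥ (Z t₀ *ᵥ u) ≤ 0 := by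
    by_contra! h
    exact hnot (posDef_of_forall_unit (hherm t₀ ht₀) h)
  have hZc : ContinuousOn Z (Icc a b) := fun t ht => (hZ t ht).continuousWithinAt
  obtain ⟨t₁, ht₁, v, hv, hvZ, hafter⟩ := exists_last_dotProduct_mulVec_nonpos hZc ht₀ hv₀ hv₀Z
  have ht₁ab : t₁ ∈ Icc a b := ⟨ht₀.1.trans ht₁.1, ht₁.2⟩
  have ht₁b : t₁ < b := by
    refine ht₁.2.lt_of_ne fun h => hvZ.not_gt ?_
    have hv0 : v ≠ 0 := by rintro rfl; simp at hv
    simpa [h] using hb.dotProduct_mulVec_pos hv0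
  have hpsd : (Z t₁).PosSemidef := by
    refine posSemidef_of_forall_unit (hherm t₁ ht₁ab) fun u hu => ?_
    have hlim : Tendsto (fun t => u ⬝ᵥ (Z t *ᵥ u)) (𝓝[>] t₁) (𝓝 (u ⬝ᵥ (Z t₁ *ᵥ u))) :=
      ((quadFormCLM u).continuous.continuousAt.comp_continuousWithinAt
        (hZc t₁ ht₁ab)).mono_of_mem_nhdsWithin (Icc_mem_nhdsGT_of_mem ⟨ht₁ab.1, ht₁b⟩)
    refine ge_of_tendsto hlim ?_
    filter_upwards [Ioc_mem_nhdsGT ht₁b] with t ht using (hafter t ht u hu).le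
  have hzero : v ⬝ᵥ (Z t₁ *ᵥ v) = 0 :=
    hvZ.antisymm (by simpa using hpsd.dotProduct_mulVec_nonneg v)
  refine (htouch t₁ ⟨ht₁ab.1, ht₁b⟩ hpsd v hv hzero).not_ge ?_
  refine IsMinOn.hasDerivWithinAt_nonneg_Icc ht₁b (fun t ht => ?_)
    (((quadFormCLM v).hasFDerivAt.comp_hasDerivWithinAt t₁ (hZ t₁ ht₁ab)).mono
      (Icc_subset_Icc_left ht₁ab.1))
  show v ⬝ᵥ (Z t₁ *ᵥ v) ≤ v ⬝ᵥ (Z t *ᵥ v)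
  rcases ht.1.eq_or_lt with rfl | hlt
  · exact le_rfl
  · exact hzero ▸ (hafter t ⟨hlt, ht.2⟩ v hv).le

noncomputable def lyapunovMap (A : Matrix ι ι ℝ) (E : κ → Matrix ι ι ℝ) (C : μ → Matrix ι ι ℝ) :
    Matrix ι ι ℝ →L[ℝ] Matrix ι ι ℝ :=
  LinearMap.toContinuousLinearMap
    { toFun X := X * A + Aᵀ * X + (∑ i, (E i)ᵀ * X * E i) + ∑ j, (C j)ᵀ * X * C j
      map_add' X Y := by
        simp only [add_mul, mul_add, Finset.sum_add_distrib]
        abel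
      map_smul' c X := by
        simp [smul_add, Finset.smul_sum, smul_mul_assoc, mul_smul_comm] }

theorem lyapunovMap_apply (A : Matrix ι ι ℝ) (E : κ → Matrix ι ι ℝ) (C : μ → Matrix ι ι ℝ)
    (X : Matrix ι ι ℝ) :
    lyapunovMap A E C X =
      X * A + Aᵀ * X + (∑ i, (E i)ᵀ * X * E i) + ∑ j, (C j)ᵀ * X * C j :=
  rfl

theorem transpose_lyapunovMap (A : Matrix ι ι ℝ) (E : κ → Matrix ι ι ℝ)
    (C : μ → Matrix ι ι ℝ) (X : Matrix ι ι ℝ) :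
    (lyapunovMap A E C X)ᵀ = lyapunovMap A E C Xᵀ := by
  simp only [lyapunovMap_apply, transpose_add, transpose_mul, transpose_sum, transpose_transpose,
    Matrix.mul_assoc, add_comm (Aᵀ * Xᵀ)]

theorem continuousOn_lyapunovMap {X : Type*} [TopologicalSpace X] {s : Set X}
    {A : X → Matrix ι ι ℝ} {E : κ → X → Matrix ι ι ℝ} {C : μ → X → Matrix ι ι ℝ}
    (hA : ContinuousOn A s) (hE : ∀ i, ContinuousOn (E i) s) (hC : ∀ j, ContinuousOn (C j) s) :
    ContinuousOn (fun x => lyapunovMap (A x) (fun i => E i x) (fun j => C j x)) s := by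
  refine continuousOn_clm_apply.2 fun Y => ?_
  -- back from the normed-space instances on `Matrix` to the algebraic ones `lyapunovMap` uses
  change ContinuousOn (fun x => lyapunovMap (A x) (fun i => E i x) (fun j => C j x) Y) s
  simp only [lyapunovMap_apply]
  fun_prop

theorem two_mul_dotProduct_mulVec_le_lyapunovMap [DecidableEq ι] {A Q Y : Matrix ι ι ℝ}
    {E : κ → Matrix ι ι ℝ} {C : μ → Matrix ι ι ℝ} {c : ℝ} {v : ι → ℝ} (hc : 0 ≤ c)
    (hQ : Q.PosSemidef) (hY : (Y - c • 1).PosSemidef) (hv : v ⬝ᵥ ((Y - c • 1) *ᵥ v) = 0) :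
    2 * c * (v ⬝ᵥ (A *ᵥ v)) ≤ v ⬝ᵥ ((lyapunovMap A E C Y + Q) *ᵥ v) := by
  have hYpsd : Y.PosSemidef := by simpa using hY.add ((PosSemidef.one (n := ι)).smul hc)
  have hYt : Yᵀ = Y := by simpa [conjTranspose_eq_transpose_of_trivial] using hYpsd.isHermitian.eq
  have hYv : Y *ᵥ v = c • v := by
    have := (hY.dotProduct_mulVec_zero_iff v).1 (by simpa using hv)
    rwa [sub_mulVec, smul_mulVec, one_mulVec, sub_eq_zero] at this
  have hcongr : ∀ B : Matrix ι ι ℝ, (Bᵀ * Y * B).PosSemidef := fun B => by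
    simpa [conjTranspose_eq_transpose_of_trivial] using hYpsd.conjTranspose_mul_mul_same B
  have hrest : ((∑ i, (E i)ᵀ * Y * E i) + (∑ j, (C j)ᵀ * Y * C j) + Q).PosSemidef :=
    ((posSemidef_sum _ fun i _ => hcongr (E i)).add
      (posSemidef_sum _ fun j _ => hcongr (C j))).add hQ
  have hYA : v ⬝ᵥ ((Y * A) *ᵥ v) = c * (v ⬝ᵥ (A *ᵥ v)) := by
    rw [← mulVec_mulVec, dotProduct_mulVec, ← mulVec_transpose, hYt, hYv, smul_dotProduct,
      smul_eq_mul]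
  have hAY : v ⬝ᵥ ((Aᵀ * Y) *ᵥ v) = c * (v ⬝ᵥ (A *ᵥ v)) := by
    rw [← hYt, ← transpose_mul, ← hYA, mulVec_transpose, dotProduct_comm, ← dotProduct_mulVec]
  have hsplit : lyapunovMap A E C Y + Q =
      Y * A + Aᵀ * Y + ((∑ i, (E i)ᵀ * Y * E i) + (∑ j, (C j)ᵀ * Y * C j) + Q) := by
    rw [lyapunovMap_apply]; abel
  rw [hsplit, add_mulVec, add_mulVec, dotProduct_add, dotProduct_add, hYA, hAY]
  have := hrest.dotProduct_mulVec_nonneg v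
  rw [star_trivial] at this
  linarith

theorem isHermitian_of_hasDerivWithinAt_lyapunovMap {A : ℝ → Matrix ι ι ℝ}
    {E : κ → ℝ → Matrix ι ι ℝ} {C : μ → ℝ → Matrix ι ι ℝ} {Q Y : ℝ → Matrix ι ι ℝ} {a b : ℝ}
    (hA : ContinuousOn A (Icc a b)) (hE : ∀ i, ContinuousOn (E i) (Icc a b))
    (hC : ∀ j, ContinuousOn (C j) (Icc a b)) (hQ : ∀ t ∈ Icc a b, (Q t).IsHermitian)
    (hY : ∀ t ∈ Icc a b, HasDerivWithinAt Y
      (-(lyapunovMap (A t) (fun i => E i t) (fun j => C j t) (Y t) + Q t)) (Icc a b) t)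
    (hYb : (Y b).IsHermitian) :
    ∀ t ∈ Icc a b, (Y t).IsHermitian := by
  have hD : EqOn (fun t => (Y t)ᵀ - Y t) 0 (Icc a b) := by
    refine eqOn_zero_of_hasDerivWithinAt_clm_apply_of_eq_zero_right
      (L := fun t => -lyapunovMap (A t) (fun i => E i t) (fun j => C j t))
      (continuousOn_lyapunovMap hA hE hC).neg (fun t ht => ?_)
      (sub_eq_zero.2 (by simpa using hYb.eq))
    have htr : HasDerivWithinAt (fun s => (Y s)ᵀ)
        (-(lyapunovMap (A t) (fun i => E i t) (fun j => C j t) (Y t) + Q t))ᵀ (Icc a b) t :=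
      (LinearMap.toContinuousLinearMap
        (transposeLinearEquiv ι ι ℝ ℝ).toLinearMap).hasFDerivAt.comp_hasDerivWithinAt t (hY t ht)
    refine (htr.sub (hY t ht)).congr_deriv ?_
    have hQt : (Q t)ᵀ = Q t := by simpa using (hQ t ht).eq
    change _ = -lyapunovMap (A t) (fun i => E i t) (fun j => C j t) ((Y t)ᵀ - Y t)
    rw [transpose_neg, transpose_add, transpose_lyapunovMap, hQt, map_sub]
    abel
  exact fun t ht => (conjTranspose_eq_transpose_of_trivial _).trans (sub_eq_zero.1 (hD ht))

theorem posDef_sub_smul_one_of_hasDerivWithinAt_lyapunovMap [DecidableEq ι]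
    {A : ℝ → Matrix ι ι ℝ} {E : κ → ℝ → Matrix ι ι ℝ} {C : μ → ℝ → Matrix ι ι ℝ}
    {Q Y : ℝ → Matrix ι ι ℝ} {c c' : ℝ → ℝ} {a b : ℝ}
    (hY : ∀ t ∈ Icc a b, HasDerivWithinAt Y
      (-(lyapunovMap (A t) (fun i => E i t) (fun j => C j t) (Y t) + Q t)) (Icc a b) t)
    (hYherm : ∀ t ∈ Icc a b, (Y t).IsHermitian) (hQ : ∀ t ∈ Icc a b, (Q t).PosSemidef)
    (hc : ∀ t ∈ Icc a b, HasDerivWithinAt c (c' t) (Icc a b) t) (hc0 : ∀ t ∈ Ico a b, 0 ≤ c t)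
    (hc' : ∀ t ∈ Ico a b, ∀ v : ι → ℝ, v ⬝ᵥ v = 1 → -(2 * c t * (v ⬝ᵥ (A t *ᵥ v))) < c' t)
    (hb : (Y b - c b • 1).PosDef) :
    ∀ t ∈ Icc a b, (Y t - c t • 1).PosDef := by
  refine posDef_of_hasDerivWithinAt_of_touching (Z' := fun t =>
      -(lyapunovMap (A t) (fun i => E i t) (fun j => C j t) (Y t) + Q t) - c' t • 1)
    (fun t ht => (hY t ht).sub ((hc t ht).smul_const 1))
    (fun t ht => (hYherm t ht).sub (isHermitian_one.smul (IsSelfAdjoint.all _))) hb ?_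
  intro t ht hpsd v hv hzero
  have := two_mul_dotProduct_mulVec_le_lyapunovMap (E := fun i => E i t)
    (C := fun j => C j t) (A := A t) (hc0 t ht) (hQ t (Ico_subset_Icc_self ht)) hpsd hzero
  have := hc' t ht v hv
  simp only [sub_mulVec, neg_mulVec, dotProduct_sub, dotProduct_neg, smul_mulVec, one_mulVec,
    dotProduct_smul, smul_eq_mul, hv, mul_one]
  linarith

theorem posDef_sub_exp_smul_one_of_hasDerivWithinAt_lyapunovMap [DecidableEq ι]
    {A : ℝ → Matrix ι ι ℝ} {E : κ → ℝ → Matrix ι ι ℝ} {C : μ → ℝ → Matrix ι ι ℝ}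
    {Q Y : ℝ → Matrix ι ι ℝ} {a b β δ ε : ℝ}
    (hY : ∀ t ∈ Icc a b, HasDerivWithinAt Y
      (-(lyapunovMap (A t) (fun i => E i t) (fun j => C j t) (Y t) + Q t)) (Icc a b) t)
    (hYherm : ∀ t ∈ Icc a b, (Y t).IsHermitian) (hQ : ∀ t ∈ Icc a b, (Q t).PosSemidef)
    (hβ : ∀ t ∈ Icc a b, ∀ v : ι → ℝ, v ⬝ᵥ v = 1 → -(2 * (v ⬝ᵥ (A t *ᵥ v))) ≤ β)
    (hε : 0 < ε) (hεδ : ε < δ) (hYb : (Y b - δ • 1).PosSemidef) :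
    ∀ t ∈ Icc a b, (Y t - ((δ - ε) * Real.exp (-(β + ε) * (b - t))) • 1).PosDef := by
  set c : ℝ → ℝ := fun s => (δ - ε) * Real.exp (-(β + ε) * (b - s))
  have hcpos : ∀ s, 0 < c s := fun s => mul_pos (sub_pos.2 hεδ) (Real.exp_pos _)
  have hc : ∀ s, HasDerivAt c ((β + ε) * c s) s := fun s => by
    have hlin : HasDerivAt (fun s => -(β + ε) * (b - s)) (β + ε) s := by
      simpa using ((hasDerivAt_id s).const_sub b).const_mul (-(β + ε))
    exact (hlin.exp.const_mul (δ - ε)).congr_deriv (by ring)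
  have hcb : Y b - c b • (1 : Matrix ι ι ℝ) = (Y b - δ • 1) + ε • 1 := by
    simp only [c, sub_self, mul_zero, Real.exp_zero, mul_one, sub_smul]
    abel
  refine posDef_sub_smul_one_of_hasDerivWithinAt_lyapunovMap hY hYherm hQ
    (fun s _ => (hc s).hasDerivWithinAt) (fun s _ => (hcpos s).le) (fun s hs v hv => ?_)
    (hcb ▸ PosDef.posSemidef_add hYb (PosDef.one.smul hε))
  nlinarith [mul_le_mul_of_nonneg_left (hβ s (Ico_subset_Icc_self hs) v hv) (hcpos s).le,
    mul_pos hε (hcpos s)]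

end Matrix

theorem linear_matrix_equation_exponential_lower_bound_general
    (T : ℝ) (δ : ℝ) (hδ : 0 < δ) (n k m : ℕ)
    (Ahat Qhat : ℝ → Matrix (Fin n) (Fin n) ℝ)
    (Chat : Fin k → ℝ → Matrix (Fin n) (Fin n) ℝ)
    (Ehat : Fin m → ℝ → Matrix (Fin n) (Fin n) ℝ)
    (hAhat : ContinuousOn Ahat (Icc 0 T))
    (hChat : ∀ j, ContinuousOn (Chat j) (Icc 0 T))
    (hEhat : ∀ i, ContinuousOn (Ehat i) (Icc 0 T))
    (hQhatpsd : ∀ t ∈ Icc 0 T, (Qhat t).PosSemidef)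
    (Hhat : Matrix (Fin n) (Fin n) ℝ)
    (hHhatδ : (Hhat - δ • (1 : Matrix (Fin n) (Fin n) ℝ)).PosSemidef)
    (Y : ℝ → Matrix (Fin n) (Fin n) ℝ)
    (hYT : Y T = Hhat)
    (hYderiv : ∀ t ∈ Icc 0 T,
      HasDerivWithinAt Y
        (-(Y t * Ahat t + (Ahat t)ᵀ * Y t
            + (∑ i : Fin m, (Ehat i t)ᵀ * Y t * Ehat i t)
            + (∑ j : Fin k, (Chat j t)ᵀ * Y t * Chat j t)
            + Qhat t))
        (Icc 0 T) t)
    (β : ℝ)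
    (hβ : β = max 0 (sSup {x : ℝ | ∃ s ∈ Icc 0 T, ∃ v : Fin n → ℝ,
      v ⬝ᵥ v = 1 ∧ x = -(2 * (v ⬝ᵥ (Ahat s *ᵥ v)))})) :
    ∀ t ∈ Icc 0 T,
      (Y t - (δ * Real.exp (-β * (T - t))) • (1 : Matrix (Fin n) (Fin n) ℝ)).PosSemidef := by
  intro t ht
  have hYherm : ∀ s ∈ Icc 0 T, (Y s).IsHermitian :=
    isHermitian_of_hasDerivWithinAt_lyapunovMap hAhat hEhat hChat
      (fun s hs => (hQhatpsd s hs).isHermitian) hYderiv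
      (by simpa [hYT] using hHhatδ.isHermitian.add (isHermitian_one.smul (IsSelfAdjoint.all δ)))
  have hβA : ∀ s ∈ Icc 0 T, ∀ v : Fin n → ℝ, v ⬝ᵥ v = 1 → -(2 * (v ⬝ᵥ (Ahat s *ᵥ v))) ≤ β :=
    fun s hs v hv => hβ ▸ (neg_two_mul_dotProduct_mulVec_le_sSup isCompact_Icc hAhat hs hv).trans
      (le_max_right _ _)
  have hlim : Tendsto
      (fun ε => Y t - ((δ - ε) * Real.exp (-(β + ε) * (T - t))) • (1 : Matrix (Fin n) (Fin n) ℝ))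
      (𝓝[>] 0) (𝓝 (Y t - (δ * Real.exp (-β * (T - t))) • 1)) := by
    have hcont : Continuous fun ε =>
        Y t - ((δ - ε) * Real.exp (-(β + ε) * (T - t))) • (1 : Matrix (Fin n) (Fin n) ℝ) := by
      fun_prop
    simpa using (hcont.tendsto 0).mono_left nhdsWithin_le_nhds
  refine isClosed_setOf_posSemidef.mem_of_tendsto hlim ?_
  filter_upwards [Ioo_mem_nhdsGT hδ] with ε hε
  exact (posDef_sub_exp_smul_one_of_hasDerivWithinAt_lyapunovMap hYderiv hYherm hQhatpsd hβA
    hε.1 hε.2 (hYT ▸ hHhatδ) t ht).posSemidef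

/-- Deterministic specialization of Lemma 3.2: exponential lower bound for the
linear matrix equation. `Ahat`, `Qhat`, `Chat j`, `Ehat i`, `Hhat` play the
roles of Â, Q̂, Ĉⱼ, Êᵢ, Ĥ, and
`β = max {0, sup_{s ∈ [0,T], |v| = 1} -2 v'Â(s)v}`. -/
theorem linear_matrix_equation_exponential_lower_bound
    (T : ℝ) (hT : 0 < T) (δ : ℝ) (hδ : 0 < δ) (n k m : ℕ)
    (Ahat Qhat : ℝ → Matrix (Fin n) (Fin n) ℝ)
    (Chat : Fin k → ℝ → Matrix (Fin n) (Fin n) ℝ)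
    (Ehat : Fin m → ℝ → Matrix (Fin n) (Fin n) ℝ)
    (hAhat : ContinuousOn Ahat (Icc 0 T)) (hQhat : ContinuousOn Qhat (Icc 0 T))
    (hChat : ∀ j, ContinuousOn (Chat j) (Icc 0 T))
    (hEhat : ∀ i, ContinuousOn (Ehat i) (Icc 0 T))
    (hQhatpsd : ∀ t ∈ Icc 0 T, (Qhat t).PosSemidef)
    (Hhat : Matrix (Fin n) (Fin n) ℝ) (hHhatsymm : Hhatᵀ = Hhat)
    (hHhatδ : (Hhat - δ • (1 : Matrix (Fin n) (Fin n) ℝ)).PosSemidef)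
    (Y : ℝ → Matrix (Fin n) (Fin n) ℝ)
    (hYT : Y T = Hhat)
    (hYderiv : ∀ t ∈ Icc 0 T,
      HasDerivWithinAt Y
        (-(Y t * Ahat t + (Ahat t)ᵀ * Y t
            + (∑ i : Fin m, (Ehat i t)ᵀ * Y t * Ehat i t)
            + (∑ j : Fin k, (Chat j t)ᵀ * Y t * Chat j t)
            + Qhat t))
        (Icc 0 T) t)
    (β : ℝ)
    (hβ : β = max 0 (sSup {x : ℝ | ∃ s ∈ Icc 0 T, ∃ v : Fin n → ℝ,
      v ⬝ᵥ v = 1 ∧ x = -(2 * (v ⬝ᵥ (Ahat s *ᵥ v)))})) :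
    ∀ t ∈ Icc 0 T,
      (Y t - (δ * Real.exp (-β * (T - t))) • (1 : Matrix (Fin n) (Fin n) ℝ)).PosSemidef :=
  linear_matrix_equation_exponential_lower_bound_general T δ hδ n k m Ahat Qhat Chat Ehat hAhat
    hChat hEhat hQhatpsd Hhat hHhatδ Y hYT hYderiv β hβ
end
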